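/- arXiv:1711.03274 — 9 statements merged into one kernel-verified Lean document; each statement's English description precedes it below -/
import Mathlib

section
/- Let C, C', P, Q be n×n real matrices. Assume (i) PCQ ≤ PC'Q entrywise; (ii) C' has an eigenvector Qu for a real eigenvalue λ', where u is a nonnegative column vector; (iii) C has a left eigenvector v^T P for a real eigenvalue λ, where v is a nonnegative row vector; and (iv) v^T P Q u > 0. Then λ ≤ λ'. Moreover, λ = λ' if and only if (PC'Q)_{ij} = (PCQ)_{ij} for all pairs (i,j) with v_i ≠ 0 and u_j ≠ 0. -/
/-!
Both eigen-relations evaluate the same bilinear form `v ⬝ᵥ M *ᵥ u`: for `M = P C Q` it equals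
`λ s` and for `M = P C' Q` it equals `λ' s`, where `s = vᵀ P Q u > 0`. Since `v, u ≥ 0`, the
form is monotone in `M`, which gives `λ ≤ λ'`; and it is strictly monotone in every entry
`(i, j)` with `v i ≠ 0` and `u j ≠ 0`, which gives the equality case.
-/

open Matrix

namespace Matrix

section Eigen

variable {l m n R : Type*} [Fintype l] [Fintype m] [Fintype n] [CommSemiring R]

theorem dotProduct_mul_mul_mulVec_of_vecMul_eq_smul {P : Matrix l m R} {C : Matrix m m R}
    (Q : Matrix m n R) {v : l → R} (u : n → R) {lam : R} (h : (v ᵥ* P) ᵥ* C = lam • (v ᵥ* P)) :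
    v ⬝ᵥ (P * C * Q) *ᵥ u = lam * ((v ᵥ* P) ⬝ᵥ Q *ᵥ u) := by
  rw [dotProduct_mulVec, ← vecMul_vecMul, ← vecMul_vecMul, h, smul_vecMul, smul_dotProduct,
    dotProduct_mulVec, smul_eq_mul]

theorem dotProduct_mul_mul_mulVec_of_mulVec_eq_smul (P : Matrix l m R) {C : Matrix m m R}
    {Q : Matrix m n R} (v : l → R) {u : n → R} {lam : R} (h : C *ᵥ (Q *ᵥ u) = lam • (Q *ᵥ u)) :
    v ⬝ᵥ (P * C * Q) *ᵥ u = lam * ((v ᵥ* P) ⬝ᵥ Q *ᵥ u) := by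
  rw [Matrix.mul_assoc, ← mulVec_mulVec, ← mulVec_mulVec, h, mulVec_smul, dotProduct_smul,
    dotProduct_mulVec, smul_eq_mul]

end Eigen

section Monotone

variable {m n R : Type*} [Fintype m] [Fintype n] [CommRing R] [LinearOrder R]
  [IsStrictOrderedRing R] {A B : Matrix m n R} {v : m → R} {u : n → R}

theorem dotProduct_mulVec_le_of_le (hAB : ∀ i j, A i j ≤ B i j) (hv : 0 ≤ v) (hu : 0 ≤ u) :
    v ⬝ᵥ A *ᵥ u ≤ v ⬝ᵥ B *ᵥ u := by
  rw [dot_mulVec_eq_sum_sum, dot_mulVec_eq_sum_sum]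
  gcongr with j _ i _
  · exact hu j
  · exact hv i
  · exact hAB i j

theorem dotProduct_mulVec_eq_iff_of_le (hAB : ∀ i j, A i j ≤ B i j) (hv : 0 ≤ v) (hu : 0 ≤ u) :
    v ⬝ᵥ A *ᵥ u = v ⬝ᵥ B *ᵥ u ↔ ∀ i j, v i ≠ 0 → u j ≠ 0 → A i j = B i j := by
  have hterm : ∀ i j, v i * A i j * u j ≤ v i * B i j * u j := fun i j =>
    mul_le_mul_of_nonneg_right (mul_le_mul_of_nonneg_left (hAB i j) (hv i)) (hu j)
  rw [dot_mulVec_eq_sum_sum, dot_mulVec_eq_sum_sum,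
    Finset.sum_eq_sum_iff_of_le fun j _ => Finset.sum_le_sum fun i _ => hterm i j]
  simp only [Finset.mem_univ, true_implies,
    Finset.sum_eq_sum_iff_of_le fun i _ => hterm i _, mul_eq_mul_left_iff,
    mul_eq_mul_right_iff]
  exact ⟨fun h i j => by have := h j i; tauto, fun h j i => by have := h i j; tauto⟩

end Monotone

end Matrix

theorem stmt_2 {n : ℕ} (C C' P Q : Matrix (Fin n) (Fin n) ℝ)
    (u v : Fin n → ℝ) (lam lam' : ℝ)
    (h1 : ∀ i j, (P * C * Q) i j ≤ (P * C' * Q) i j)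
    (hu : ∀ j, 0 ≤ u j)
    (h2 : C'.mulVec (Q.mulVec u) = lam' • Q.mulVec u)
    (hv : ∀ i, 0 ≤ v i)
    (h3 : Matrix.vecMul (Matrix.vecMul v P) C = lam • Matrix.vecMul v P)
    (h4 : 0 < dotProduct (Matrix.vecMul v P) (Q.mulVec u)) :
    lam ≤ lam' ∧
      (lam = lam' ↔ ∀ i j, v i ≠ 0 → u j ≠ 0 → (P * C' * Q) i j = (P * C * Q) i j) := by
  have hC := dotProduct_mul_mul_mulVec_of_vecMul_eq_smul Q u h3
  have hC' := dotProduct_mul_mul_mulVec_of_mulVec_eq_smul P v h2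
  refine ⟨le_of_mul_le_mul_right ?_ h4, ?_⟩
  · rw [← hC, ← hC']
    exact dotProduct_mulVec_le_of_le h1 hv hu
  · rw [← mul_left_inj' h4.ne', ← hC, ← hC', dotProduct_mulVec_eq_iff_of_le h1 hv hu]
    simp only [eq_comm]
end

section
/- Let C and C' be n×n real matrices. Assume (i) C and C' agree in inequality C[−|n) ≤ C'[−|n) (entrywise inequality on all columns except the last) and the row-sum vector of C' entrywise dominates the row-sum vector of C; (ii) C' has a rooted eigenvector v' for a real eigenvalue λ'; (iii) C has a nonnegative left eigenvector v^T for a real eigenvalue λ; and (iv) v^T v' > 0. Then λ ≤ λ'. -/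
/-!
Writing `v'_j = (v'_j - v'_n) + v'_n`, each entry of `C v'` splits into a combination of the
first `n - 1` columns with nonnegative weights `v'_j - v'_n` plus the row sum times `v'_n ≥ 0`;
both parts grow when `C` is replaced by `C'`, so `C v' ≤ C' v'`. Pairing with the nonnegative
left eigenvector `v` gives `λ (v ⬝ v') ≤ λ' (v ⬝ v')`, and `v ⬝ v' > 0` cancels.
-/

/-- A vector is rooted if every entry is at least the last entry, which is nonnegative. -/
def Rooted {n : ℕ} (v : Fin (n + 1) → ℝ) : Prop :=
  0 ≤ v (Fin.last n) ∧ ∀ j, v (Fin.last n) ≤ v j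

open Matrix

theorem Matrix.mulVec_eq_sum_sub_add_sum_mul {m ι R : Type*} [Fintype ι] [CommRing R]
    (M : Matrix m ι R) (w : ι → R) (k : ι) (i : m) :
    (M *ᵥ w) i = ∑ j, M i j * (w j - w k) + (∑ j, M i j) * w k := by
  rw [Finset.sum_mul, ← Finset.sum_add_distrib]
  exact Finset.sum_congr rfl fun j _ => by ring

theorem Rooted.mulVec_le_mulVec {n : ℕ} {C C' : Matrix (Fin (n + 1)) (Fin (n + 1)) ℝ}
    {w : Fin (n + 1) → ℝ} (hw : Rooted w)
    (hcol : ∀ i j, j ≠ Fin.last n → C i j ≤ C' i j)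
    (hrow : ∀ i, ∑ j, C i j ≤ ∑ j, C' i j) :
    C *ᵥ w ≤ C' *ᵥ w := by
  intro i
  rw [C.mulVec_eq_sum_sub_add_sum_mul w (Fin.last n),
    C'.mulVec_eq_sum_sub_add_sum_mul w (Fin.last n)]
  refine add_le_add (Finset.sum_le_sum fun j _ => ?_) (mul_le_mul_of_nonneg_right (hrow i) hw.1)
  rcases eq_or_ne j (Fin.last n) with rfl | hj
  · simp
  · exact mul_le_mul_of_nonneg_right (hcol i j hj) (sub_nonneg.2 (hw.2 j))

theorem le_of_vecMul_eq_smul_of_mulVec_eq_smul {ι R : Type*} [Fintype ι] [CommRing R]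
    [LinearOrder R] [IsStrictOrderedRing R] {C C' : Matrix ι ι R} {v w : ι → R} {lam lam' : R}
    (hCC' : C *ᵥ w ≤ C' *ᵥ w) (hv : 0 ≤ v) (hvC : v ᵥ* C = lam • v)
    (hC'w : C' *ᵥ w = lam' • w) (hvw : 0 < v ⬝ᵥ w) :
    lam ≤ lam' := by
  have hpair : v ⬝ᵥ (C *ᵥ w) ≤ v ⬝ᵥ (C' *ᵥ w) :=
    Finset.sum_le_sum fun i _ => mul_le_mul_of_nonneg_left (hCC' i) (hv i)
  rw [dotProduct_mulVec, hvC, hC'w, smul_dotProduct, dotProduct_smul, smul_eq_mul,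
    smul_eq_mul] at hpair
  exact le_of_mul_le_mul_right hpair hvw

theorem stmt_5_general {n : ℕ} (C C' : Matrix (Fin (n + 1)) (Fin (n + 1)) ℝ)
    (v v' : Fin (n + 1) → ℝ) (lam lam' : ℝ)
    (h1 : ∀ i j, j ≠ Fin.last n → C i j ≤ C' i j)
    (h1' : ∀ i, ∑ j, C i j ≤ ∑ j, C' i j)
    (h2 : Rooted v') (h2e : C'.mulVec v' = lam' • v')
    (h3 : ∀ i, 0 ≤ v i) (h3e : Matrix.vecMul v C = lam • v)
    (h4 : 0 < dotProduct v v') :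
    lam ≤ lam' :=
  le_of_vecMul_eq_smul_of_mulVec_eq_smul (h2.mulVec_le_mulVec h1 h1') h3 h3e h2e h4

theorem stmt_5 {n : ℕ} (C C' : Matrix (Fin (n + 1)) (Fin (n + 1)) ℝ)
    (v v' : Fin (n + 1) → ℝ) (lam lam' : ℝ)
    (h1 : ∀ i j, j ≠ Fin.last n → C i j ≤ C' i j)
    (h1' : ∀ i, ∑ j, C i j ≤ ∑ j, C' i j)
    (h2 : Rooted v') (h2' : v' ≠ 0) (h2e : C'.mulVec v' = lam' • v')
    (h3 : ∀ i, 0 ≤ v i) (h3e : Matrix.vecMul v C = lam • v)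
    (h4 : 0 < dotProduct v v') :
    lam ≤ lam' :=
  stmt_5_general C C' v v' lam lam' h1 h1' h2 h2e h3 h3e h4
end

section
/- Let C' be an n×n real matrix that is rooted, meaning: every column of C' except the last is a rooted vector, and the row-sum vector of C' is rooted. Then the spectral radius ρ(C') is an eigenvalue of C', and C' has a rooted eigenvector v' for ρ(C'). Moreover: (i) if the last row of C' restricted to the first n−1 columns is entrywise positive, then v' is positive; (ii) if additionally r'_i > r'_n for all 1 ≤ i ≤ n−1 (where r'_i are the row-sums of C'), then v'_j > v'_n for all 1 ≤ j ≤ n−1. -/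
/-- Spectral radius of a real square matrix: maximum modulus of its complex eigenvalues. -/
noncomputable def specRad {n : ℕ} (A : Matrix (Fin n) (Fin n) ℝ) : ℝ :=
  ((A.map (fun x => (x : ℂ))).charpoly.roots.map (fun z => ‖z‖)).foldr max 0

/-!
Let `N = lastToOthers n` copy the last coordinate into all the others. A vector `v` is rooted
exactly when `(1 - N) v ≥ 0`, and `(1 - N)⁻¹ = 1 + N`. The columns of `C' (1 + N)` are those of
`C'` with the last one replaced by the row sums, so for rooted `C'` the similar matrix
`B = (1 - N) C' (1 + N) = rootedConj C'` is entrywise nonnegative. Perron–Frobenius gives a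
nonnegative eigenvector `w` of `B` for `ρ(B) = ρ(C')`, and `v' = (1 + N) w` is a rooted
eigenvector of `C'`. Off the diagonal, row `n` of `B` is the last row of `C'`, which forces
`w_n > 0` in (i); the entries `B_{j n} = r_j - r_n > 0` then force `w_j = v'_j - v'_n > 0` in (ii).

Perron–Frobenius for nonnegative `B` comes from the positive matrices `B + ε`: for them the
largest Collatz–Wielandt value `max {μ | μ x ≤ (B + ε) x for some x in the simplex}` is attained
at an eigenvector and dominates `|z|` for every eigenvalue `z` of `B`; compactness lets `ε → 0`.
-/

open Matrix Polynomial

namespace Multiset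

variable {α : Type*} [LinearOrder α]

lemma le_foldr_max (b : α) (s : Multiset α) : b ≤ s.foldr max b := by
  induction s using Multiset.induction_on with
  | empty => simp
  | cons a s ih => exact ih.trans (by simp)

lemma le_foldr_max_of_mem {a : α} (b : α) {s : Multiset α} (ha : a ∈ s) :
    a ≤ s.foldr max b := by
  induction s using Multiset.induction_on with
  | empty => simp at ha
  | cons c s ih =>
    rw [foldr_cons]
    rcases mem_cons.mp ha with rfl | ha
    · exact le_max_left _ _
    · exact (ih ha).trans (le_max_right _ _)

lemma foldr_max_le {b c : α} {s : Multiset α} (hb : b ≤ c) (hs : ∀ a ∈ s, a ≤ c) :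
    s.foldr max b ≤ c := by
  induction s using Multiset.induction_on with
  | empty => simpa
  | cons a s ih =>
    rw [foldr_cons]
    exact max_le (hs a (mem_cons_self _ _)) (ih fun x hx => hs x (mem_cons_of_mem hx))

end Multiset

lemma Matrix.isRoot_charpoly_iff {K ι : Type*} [Field K] [Fintype ι] [DecidableEq ι]
    (A : Matrix ι ι K) (μ : K) : A.charpoly.IsRoot μ ↔ ∃ v ≠ 0, A *ᵥ v = μ • v := by
  have hscalar : ∀ v : ι → K, scalar ι μ *ᵥ v = μ • v := fun v => by
    ext i
    simp [mulVec_diagonal]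
  rw [IsRoot.def, eval_charpoly, ← exists_mulVec_eq_zero_iff]
  simp only [sub_mulVec, hscalar, sub_eq_zero, eq_comm]

section SpectralRadius

variable {m : ℕ}

lemma specRad_nonneg (A : Matrix (Fin m) (Fin m) ℝ) : 0 ≤ specRad A :=
  Multiset.le_foldr_max _ _

lemma specRad_congr {A B : Matrix (Fin m) (Fin m) ℝ} (h : A.charpoly = B.charpoly) :
    specRad A = specRad B := by
  have hmap (A : Matrix (Fin m) (Fin m) ℝ) :
      (A.map ((↑) : ℝ → ℂ)).charpoly = A.charpoly.map Complex.ofRealHom :=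
    charpoly_map A Complex.ofRealHom
  simp only [specRad, hmap, h]

lemma norm_le_specRad {A : Matrix (Fin m) (Fin m) ℝ} {z : ℂ} {u : Fin m → ℂ} (hu : u ≠ 0)
    (h : A.map ((↑) : ℝ → ℂ) *ᵥ u = z • u) : ‖z‖ ≤ specRad A := by
  have hroot : z ∈ (A.map ((↑) : ℝ → ℂ)).charpoly.roots :=
    (mem_roots (charpoly_monic _).ne_zero).mpr ((isRoot_charpoly_iff _ z).mpr ⟨u, hu, h⟩)
  exact Multiset.le_foldr_max_of_mem _ (Multiset.mem_map_of_mem _ hroot)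

lemma specRad_le {A : Matrix (Fin m) (Fin m) ℝ} {c : ℝ} (hc : 0 ≤ c)
    (h : ∀ (z : ℂ) (u : Fin m → ℂ), u ≠ 0 → A.map ((↑) : ℝ → ℂ) *ᵥ u = z • u → ‖z‖ ≤ c) :
    specRad A ≤ c := by
  refine Multiset.foldr_max_le hc fun a ha => ?_
  obtain ⟨z, hz, rfl⟩ := Multiset.mem_map.mp ha
  obtain ⟨u, hu, huz⟩ := (isRoot_charpoly_iff _ z).mp (isRoot_of_mem_roots hz)
  exact h z u hu huz

lemma abs_le_specRad {A : Matrix (Fin m) (Fin m) ℝ} {μ : ℝ} {v : Fin m → ℝ} (hv : v ≠ 0)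
    (h : A *ᵥ v = μ • v) : |μ| ≤ specRad A := by
  have hu : (Complex.ofRealHom ∘ v) ≠ 0 := by simpa [funext_iff] using hv
  have hμ : A.map ((↑) : ℝ → ℂ) *ᵥ (Complex.ofRealHom ∘ v)
      = (μ : ℂ) • (Complex.ofRealHom ∘ v) := by
    ext i
    have := RingHom.map_mulVec Complex.ofRealHom A v i
    rw [h] at this
    exact this.symm.trans (by simp)
  simpa using norm_le_specRad hu hμ

end SpectralRadius

lemma exists_pos_add_smul_le {ι : Type*} [Finite ι] {μ : ℝ} {z w : ι → ℝ}
    (h : ∀ i, μ * z i < w i) : ∃ δ > 0, (μ + δ) • z ≤ w := by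
  have hev : ∀ᶠ δ in nhds (0 : ℝ), ∀ i, (μ + δ) * z i < w i :=
    Filter.eventually_all.mpr fun i =>
      Filter.Tendsto.eventually_lt_const (by simpa using h i)
        (by fun_prop : Continuous fun δ => (μ + δ) * z i).continuousAt.tendsto
  obtain ⟨δ, hδ, hδ0⟩ := ((hev.filter_mono nhdsWithin_le_nhds).and
    (self_mem_nhdsWithin : Set.Ioi (0 : ℝ) ∈ nhdsWithin 0 (Set.Ioi 0))).exists
  exact ⟨δ, hδ0, fun i => (hδ i).le⟩

section CollatzWielandt

variable {ι : Type*} [Fintype ι]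

def collatzWielandtSet (B : Matrix ι ι ℝ) : Set ℝ :=
  {μ | ∃ x ∈ stdSimplex ℝ ι, μ • x ≤ B *ᵥ x}

variable {B B' : Matrix ι ι ℝ}

lemma mulVec_le_mulVec_of_le_of_nonneg (hBB' : ∀ i j, B i j ≤ B' i j) {x : ι → ℝ}
    (hx : 0 ≤ x) : B *ᵥ x ≤ B' *ᵥ x := fun i =>
  Finset.sum_le_sum fun j _ => mul_le_mul_of_nonneg_right (hBB' i j) (hx j)

lemma mulVec_pos (hB : ∀ i j, 0 < B i j) {v : ι → ℝ} (hv0 : 0 ≤ v) (hv : v ≠ 0) (i : ι) :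
    0 < (B *ᵥ v) i := by
  obtain ⟨j, hj⟩ := Function.ne_iff.mp hv
  exact Finset.sum_pos' (fun k _ => mul_nonneg (hB i k).le (hv0 k))
    ⟨j, Finset.mem_univ j, mul_pos (hB i j) (lt_of_le_of_ne (hv0 j) (Ne.symm hj))⟩

lemma collatzWielandtSet_mono (hBB' : ∀ i j, B i j ≤ B' i j) :
    collatzWielandtSet B ⊆ collatzWielandtSet B' := fun _ ⟨x, hx, hμ⟩ =>
  ⟨x, hx, hμ.trans (mulVec_le_mulVec_of_le_of_nonneg hBB' hx.1)⟩

lemma le_sum_of_mem_collatzWielandtSet (hB : ∀ i j, 0 ≤ B i j) {μ : ℝ}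
    (hμ : μ ∈ collatzWielandtSet B) : μ ≤ ∑ i, ∑ j, B i j := by
  obtain ⟨x, ⟨hx0, hx1⟩, hμx⟩ := hμ
  have hx_le_one : ∀ j, x j ≤ 1 := fun j =>
    hx1 ▸ Finset.single_le_sum (fun i _ => hx0 i) (Finset.mem_univ j)
  calc μ = ∑ i, μ * x i := by rw [← Finset.mul_sum, hx1, mul_one]
    _ ≤ ∑ i, ∑ j, B i j * x j := Finset.sum_le_sum fun i _ => hμx i
    _ ≤ ∑ i, ∑ j, B i j := Finset.sum_le_sum fun i _ => Finset.sum_le_sum fun j _ =>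
      mul_le_of_le_one_right (hB i j) (hx_le_one j)

lemma zero_mem_collatzWielandtSet [Nonempty ι] (hB : ∀ i j, 0 ≤ B i j) :
    (0 : ℝ) ∈ collatzWielandtSet B := by
  classical
  let i₀ : ι := Classical.arbitrary ι
  refine ⟨Pi.single i₀ 1, single_mem_stdSimplex ℝ i₀, fun i => ?_⟩
  simp only [zero_smul, Pi.zero_apply]
  exact Finset.sum_nonneg fun j _ => mul_nonneg (hB i j) ((single_mem_stdSimplex ℝ i₀).1 j)

lemma mem_collatzWielandtSet_of_smul_le {μ : ℝ} {y : ι → ℝ} (hy0 : 0 ≤ y) (hy : y ≠ 0)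
    (h : μ • y ≤ B *ᵥ y) : μ ∈ collatzWielandtSet B := by
  have hsum : 0 < ∑ i, y i := by
    obtain ⟨i, hi⟩ := Function.ne_iff.mp hy
    exact Finset.sum_pos' (fun j _ => hy0 j)
      ⟨i, Finset.mem_univ i, lt_of_le_of_ne (hy0 i) (Ne.symm hi)⟩
  refine ⟨(∑ i, y i)⁻¹ • y, ⟨fun i => ?_, ?_⟩, ?_⟩
  · exact mul_nonneg (inv_nonneg.mpr hsum.le) (hy0 i)
  · simp only [Pi.smul_apply, smul_eq_mul, ← Finset.mul_sum]
    exact inv_mul_cancel₀ hsum.ne'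
  · rw [smul_comm, mulVec_smul]
    exact smul_le_smul_of_nonneg_left h (inv_nonneg.mpr hsum.le)

lemma norm_mem_collatzWielandtSet (hB : ∀ i j, 0 ≤ B i j) {z : ℂ} {u : ι → ℂ} (hu : u ≠ 0)
    (h : B.map ((↑) : ℝ → ℂ) *ᵥ u = z • u) : ‖z‖ ∈ collatzWielandtSet B := by
  refine mem_collatzWielandtSet_of_smul_le (y := fun i => ‖u i‖) (fun i => norm_nonneg _)
    (by simpa [funext_iff] using hu) fun i => ?_
  calc ‖z‖ * ‖u i‖ = ‖∑ j, (B i j : ℂ) * u j‖ := by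
        rw [← norm_mul, ← smul_eq_mul, ← Pi.smul_apply, ← h]; rfl
    _ ≤ ∑ j, ‖(B i j : ℂ) * u j‖ := norm_sum_le _ _
    _ = (B *ᵥ fun i => ‖u i‖) i := by
        simp only [norm_mul, Complex.norm_real, Real.norm_of_nonneg (hB _ _)]; rfl

lemma exists_isGreatest_collatzWielandtSet [Nonempty ι] (hB : ∀ i j, 0 ≤ B i j) :
    ∃ μ, IsGreatest (collatzWielandtSet B) μ := by
  let K : Set (ℝ × (ι → ℝ)) :=
    (Set.Icc 0 (∑ i, ∑ j, B i j) ×ˢ stdSimplex ℝ ι) ∩ {p | p.1 • p.2 ≤ B *ᵥ p.2}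
  have hK : IsCompact K := (isCompact_Icc.prod (isCompact_stdSimplex ℝ ι)).inter_right
    (isClosed_le (by fun_prop) (by fun_prop))
  obtain ⟨x₀, hx₀, hx₀B⟩ := zero_mem_collatzWielandtSet hB
  obtain ⟨p, ⟨⟨⟨hp0, -⟩, hp⟩, hpB⟩, hmax⟩ := hK.exists_isMaxOn
    ⟨(0, x₀), ⟨⟨le_rfl, le_sum_of_mem_collatzWielandtSet hB ⟨x₀, hx₀, hx₀B⟩⟩, hx₀⟩, hx₀B⟩
    continuous_fst.continuousOn
  refine ⟨p.1, ⟨p.2, hp, hpB⟩, fun ν ⟨y, hy, hνy⟩ => ?_⟩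
  rcases le_or_gt ν 0 with hν | hν
  · exact hν.trans hp0
  · exact hmax (a := (ν, y))
      ⟨⟨⟨hν.le, le_sum_of_mem_collatzWielandtSet hB ⟨y, hy, hνy⟩⟩, hy⟩, hνy⟩

/-- If `B x - μ x ≥ 0` were nonzero, then `z = B x > 0` would satisfy `B z > μ z` strictly,
so a slightly larger value than `μ` would be admissible. -/
lemma mulVec_eq_smul_of_isGreatest (hB : ∀ i j, 0 < B i j) {μ : ℝ}
    (hμ : IsGreatest (collatzWielandtSet B) μ) {x : ι → ℝ} (hx : x ∈ stdSimplex ℝ ι)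
    (hμx : μ • x ≤ B *ᵥ x) : B *ᵥ x = μ • x := by
  by_contra hne
  have hx0 : x ≠ 0 := by
    rintro rfl
    simpa using hx.2
  obtain ⟨i₀, -⟩ := Function.ne_iff.mp hx0
  set z := B *ᵥ x
  have hz : ∀ i, 0 < z i := mulVec_pos hB hx.1 hx0
  have hBz : ∀ i, μ * z i < (B *ᵥ z) i := by
    have hsplit : B *ᵥ z = B *ᵥ (z - μ • x) + μ • z := by
      rw [mulVec_sub, mulVec_smul, sub_add_cancel]
    intro i
    rw [hsplit, Pi.add_apply, Pi.smul_apply, smul_eq_mul]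
    exact lt_add_of_pos_left _ (mulVec_pos hB (sub_nonneg.mpr hμx) (sub_ne_zero.mpr hne) i)
  obtain ⟨δ, hδ, hδz⟩ := exists_pos_add_smul_le hBz
  have := hμ.2 (mem_collatzWielandtSet_of_smul_le (fun i => (hz i).le)
    (fun h => (hz i₀).ne' (congrFun h i₀)) hδz)
  linarith

end CollatzWielandt

section PerronFrobenius

lemma specRad_le_of_mem_upperBounds {m : ℕ} {A : Matrix (Fin m) (Fin m) ℝ}
    (hA : ∀ i j, 0 ≤ A i j) {μ : ℝ} (hμ0 : 0 ≤ μ)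
    (hμ : μ ∈ upperBounds (collatzWielandtSet A)) : specRad A ≤ μ :=
  specRad_le hμ0 fun _ _ hu h => hμ (norm_mem_collatzWielandtSet hA hu h)

variable {n : ℕ} {B : Matrix (Fin (n + 1)) (Fin (n + 1)) ℝ}

lemma exists_approx_eigenpair (hB : ∀ i j, 0 ≤ B i j) {ε : ℝ} (hε : 0 < ε) (hε1 : ε ≤ 1) :
    ∃ μ ∈ Set.Icc (specRad B) (∑ i, ∑ j, (B i j + 1)), ∃ x ∈ stdSimplex ℝ (Fin (n + 1)),
      μ • x - B *ᵥ x = fun _ => ε := by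
  set Bε := B + of fun _ _ => ε
  have hBε : ∀ i j, 0 < Bε i j := fun i j => add_pos_of_nonneg_of_pos (hB i j) hε
  obtain ⟨μ, hμ⟩ := exists_isGreatest_collatzWielandtSet fun i j => (hBε i j).le
  obtain ⟨x, hx, hμx⟩ := hμ.1
  refine ⟨μ, ⟨?_, ?_⟩, x, hx, ?_⟩
  · refine specRad_le_of_mem_upperBounds hB (hμ.2 (zero_mem_collatzWielandtSet
      fun i j => (hBε i j).le)) fun ν hν => hμ.2 (collatzWielandtSet_mono (fun i j => ?_) hν)
    simp [Bε, hε.le]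
  · refine le_sum_of_mem_collatzWielandtSet (B := of fun i j => B i j + 1)
      (fun i j => by simp [add_nonneg (hB i j) zero_le_one])
      (collatzWielandtSet_mono (fun i j => ?_) hμ.1)
    simp [Bε, hε1]
  · have hconst : (of fun _ _ => ε : Matrix (Fin (n + 1)) (Fin (n + 1)) ℝ) *ᵥ x
        = fun _ => ε := by
      ext i
      simp [mulVec, dotProduct, ← Finset.mul_sum, hx.2]
    rw [← mulVec_eq_smul_of_isGreatest hBε hμ hx hμx, add_mulVec, hconst, add_sub_cancel_left]

theorem exists_mem_stdSimplex_mulVec_eq_specRad_smul (hB : ∀ i j, 0 ≤ B i j) :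
    ∃ x ∈ stdSimplex ℝ (Fin (n + 1)), B *ᵥ x = specRad B • x := by
  let K := Set.Icc (specRad B) (∑ i, ∑ j, (B i j + 1)) ×ˢ stdSimplex ℝ (Fin (n + 1))
  have hK : IsCompact K := isCompact_Icc.prod (isCompact_stdSimplex ℝ _)
  obtain ⟨μ₁, hμ₁, x₁, hx₁, -⟩ := exists_approx_eigenpair hB one_pos le_rfl
  obtain ⟨p, hpK, hmin⟩ := hK.exists_isMinOn ⟨(μ₁, x₁), hμ₁, hx₁⟩
    (f := fun p => ‖p.1 • p.2 - B *ᵥ p.2‖) (by fun_prop : Continuous _).continuousOn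
  have hp : B *ᵥ p.2 = p.1 • p.2 := by
    refine (sub_eq_zero.mp (norm_le_zero_iff.mp
      (le_of_forall_gt_imp_ge_of_dense fun ε hε => ?_))).symm
    obtain ⟨μ, hμ, x, hx, hμx⟩ :=
      exists_approx_eigenpair hB (lt_min hε one_pos) (min_le_right ε 1)
    calc ‖p.1 • p.2 - B *ᵥ p.2‖ ≤ ‖μ • x - B *ᵥ x‖ := hmin (show (μ, x) ∈ K from ⟨hμ, hx⟩)
      _ = min ε 1 := by rw [hμx, pi_norm_const, Real.norm_of_nonneg (le_min hε.le zero_le_one)]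
      _ ≤ ε := min_le_left ε 1
  have hp0 : p.2 ≠ 0 := by
    intro h
    simpa [h] using hpK.2.2
  have hμp : p.1 = specRad B := by
    refine le_antisymm ?_ hpK.1.1
    simpa [abs_of_nonneg ((specRad_nonneg B).trans hpK.1.1)] using abs_le_specRad hp0 hp
  exact ⟨p.2, hpK.2, hμp ▸ hp⟩

end PerronFrobenius

section EigenvectorPositivity

variable {ι : Type*} [Fintype ι] {B : Matrix ι ι ℝ} {μ : ℝ} {w : ι → ℝ}

lemma pos_of_mulVec_eq_smul_of_row_pos (hB : ∀ i j, 0 ≤ B i j) (hw0 : 0 ≤ w) (hw : w ≠ 0)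
    (hBw : B *ᵥ w = μ • w) {k : ι} (hk : ∀ j, j ≠ k → 0 < B k j) : 0 < w k := by
  refine (hw0 k).lt_of_ne fun hwk => hw (funext fun j => ?_)
  have hrow : ∑ j, B k j * w j = 0 := by
    simpa [← hwk, mulVec, dotProduct] using congrFun hBw k
  have hterm := (Finset.sum_eq_zero_iff_of_nonneg fun j _ => mul_nonneg (hB k j) (hw0 j)).mp
    hrow j (Finset.mem_univ j)
  by_cases hjk : j = k
  · exact hjk ▸ hwk.symm
  · exact (mul_eq_zero.mp hterm).resolve_left (hk j hjk).ne'

lemma pos_of_mulVec_eq_smul (hB : ∀ i j, 0 ≤ B i j) (hw0 : 0 ≤ w) (hμ : 0 ≤ μ)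
    (hBw : B *ᵥ w = μ • w) {j k : ι} (hjk : 0 < B j k) (hk : 0 < w k) : 0 < w j := by
  have hpos : 0 < μ * w j := by
    rw [← smul_eq_mul, ← Pi.smul_apply, ← hBw]
    exact Finset.sum_pos' (fun l _ => mul_nonneg (hB j l) (hw0 l))
      ⟨k, Finset.mem_univ k, mul_pos hjk hk⟩
  exact pos_of_mul_pos_right hpos hμ

end EigenvectorPositivity

section RootedConj

variable {n : ℕ}

def lastToOthers (n : ℕ) : Matrix (Fin (n + 1)) (Fin (n + 1)) ℝ :=
  of fun i j => if i ≠ Fin.last n ∧ j = Fin.last n then 1 else 0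

lemma lastToOthers_mulVec (v : Fin (n + 1) → ℝ) :
    lastToOthers n *ᵥ v = fun i => if i = Fin.last n then 0 else v (Fin.last n) := by
  ext i
  by_cases hi : i = Fin.last n <;> simp [lastToOthers, mulVec, dotProduct, hi]

lemma lastToOthers_mul_self : lastToOthers n * lastToOthers n = 0 := by
  ext i j
  simp only [mul_apply, lastToOthers, of_apply, Matrix.zero_apply]
  exact Finset.sum_eq_zero fun k _ => by split_ifs <;> simp_all

lemma one_sub_lastToOthers_mul_one_add : (1 - lastToOthers n) * (1 + lastToOthers n) = 1 := by
  simp [sub_mul, mul_add, lastToOthers_mul_self]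

lemma one_add_lastToOthers_mul_one_sub : (1 + lastToOthers n) * (1 - lastToOthers n) = 1 := by
  simp [add_mul, mul_sub, lastToOthers_mul_self]

lemma one_sub_lastToOthers_mulVec_apply (v : Fin (n + 1) → ℝ) (i : Fin (n + 1)) :
    ((1 - lastToOthers n) *ᵥ v) i = if i = Fin.last n then v i else v i - v (Fin.last n) := by
  by_cases hi : i = Fin.last n <;> simp [sub_mulVec, lastToOthers_mulVec, hi]

lemma rooted_iff_nonneg_mulVec (v : Fin (n + 1) → ℝ) :
    Rooted v ↔ 0 ≤ (1 - lastToOthers n) *ᵥ v := by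
  simp only [Rooted, Pi.le_def, Pi.zero_apply, one_sub_lastToOthers_mulVec_apply]
  constructor
  · rintro ⟨h0, h⟩ i
    split_ifs with hi
    · exact hi ▸ h0
    · exact sub_nonneg.mpr (h i)
  · intro h
    refine ⟨by simpa using h (Fin.last n), fun j => ?_⟩
    by_cases hj : j = Fin.last n
    · rw [hj]
    · simpa [hj] using h j

lemma mul_one_add_lastToOthers_apply (M : Matrix (Fin (n + 1)) (Fin (n + 1)) ℝ)
    (i j : Fin (n + 1)) :
    (M * (1 + lastToOthers n)) i j = if j = Fin.last n then ∑ l, M i l else M i j := by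
  rw [mul_add, Matrix.mul_one, Matrix.add_apply]
  by_cases hj : j = Fin.last n
  · simp [mul_apply, lastToOthers, hj, Fin.sum_univ_castSucc, add_comm]
  · simp [mul_apply, lastToOthers, hj]

def rootedConj (C : Matrix (Fin (n + 1)) (Fin (n + 1)) ℝ) :
    Matrix (Fin (n + 1)) (Fin (n + 1)) ℝ :=
  (1 - lastToOthers n) * C * (1 + lastToOthers n)

lemma rootedConj_apply (C : Matrix (Fin (n + 1)) (Fin (n + 1)) ℝ) (i j : Fin (n + 1)) :
    rootedConj C i j = ((1 - lastToOthers n) *ᵥ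
      fun k => if j = Fin.last n then ∑ l, C k l else C k j) i := by
  simp only [rootedConj, Matrix.mul_assoc, ← mul_one_add_lastToOthers_apply]
  rfl

lemma charpoly_rootedConj (C : Matrix (Fin (n + 1)) (Fin (n + 1)) ℝ) :
    (rootedConj C).charpoly = C.charpoly := by
  rw [rootedConj, charpoly_mul_comm, ← Matrix.mul_assoc, one_add_lastToOthers_mul_one_sub,
    Matrix.one_mul]

lemma mulVec_one_add_lastToOthers_mulVec (C : Matrix (Fin (n + 1)) (Fin (n + 1)) ℝ)
    (w : Fin (n + 1) → ℝ) :
    C *ᵥ ((1 + lastToOthers n) *ᵥ w) = (1 + lastToOthers n) *ᵥ (rootedConj C *ᵥ w) := by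
  rw [mulVec_mulVec, mulVec_mulVec, rootedConj, ← Matrix.mul_assoc, ← Matrix.mul_assoc,
    one_add_lastToOthers_mul_one_sub, Matrix.one_mul]

lemma rootedConj_nonneg {C : Matrix (Fin (n + 1)) (Fin (n + 1)) ℝ}
    (hcol : ∀ j, j ≠ Fin.last n → Rooted (fun i => C i j))
    (hrow : Rooted (fun i => ∑ j, C i j)) (i j : Fin (n + 1)) : 0 ≤ rootedConj C i j := by
  rw [rootedConj_apply]
  by_cases hj : j = Fin.last n
  · simpa [hj] using (rooted_iff_nonneg_mulVec _).mp hrow i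
  · simpa [hj] using (rooted_iff_nonneg_mulVec _).mp (hcol j hj) i

end RootedConj

theorem stmt_6 {n : ℕ} (C' : Matrix (Fin (n + 1)) (Fin (n + 1)) ℝ)
    (hcol : ∀ j, j ≠ Fin.last n → Rooted (fun i => C' i j))
    (hrow : Rooted (fun i => ∑ j, C' i j)) :
    ∃ v' : Fin (n + 1) → ℝ, v' ≠ 0 ∧ Rooted v' ∧
      C'.mulVec v' = specRad C' • v' ∧
      ((∀ j, j ≠ Fin.last n → 0 < C' (Fin.last n) j) → ∀ i, 0 < v' i) ∧
      (((∀ j, j ≠ Fin.last n → 0 < C' (Fin.last n) j) ∧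
          (∀ i, i ≠ Fin.last n → ∑ j, C' (Fin.last n) j < ∑ j, C' i j)) →
        ∀ j, j ≠ Fin.last n → v' (Fin.last n) < v' j) := by
  set N := lastToOthers n
  have hB := rootedConj_nonneg hcol hrow
  obtain ⟨w, hw, hBw⟩ := exists_mem_stdSimplex_mulVec_eq_specRad_smul hB
  rw [specRad_congr (charpoly_rootedConj C')] at hBw
  have hw0 : w ≠ 0 := fun h => by simpa [h] using hw.2
  have hback : (1 - N) *ᵥ ((1 + N) *ᵥ w) = w := by
    rw [mulVec_mulVec, one_sub_lastToOthers_mul_one_add, one_mulVec]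
  have hlast : ((1 + N) *ᵥ w) (Fin.last n) = w (Fin.last n) := by
    have := congrFun hback (Fin.last n)
    rwa [one_sub_lastToOthers_mulVec_apply, if_pos rfl] at this
  have hrooted : Rooted ((1 + N) *ᵥ w) := (rooted_iff_nonneg_mulVec _).mpr (hback ▸ hw.1 :)
  have hwlast : (∀ j, j ≠ Fin.last n → 0 < C' (Fin.last n) j) → 0 < w (Fin.last n) :=
    fun h => pos_of_mulVec_eq_smul_of_row_pos hB hw.1 hw0 hBw fun j hj => by
      simpa [rootedConj_apply, one_sub_lastToOthers_mulVec_apply, hj] using h j hj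
  refine ⟨(1 + N) *ᵥ w, fun h => hw0 (by simpa [h] using hback.symm), hrooted,
    by rw [mulVec_one_add_lastToOthers_mulVec, hBw, mulVec_smul], fun h i => ?_,
    fun ⟨hpos, hrs⟩ j hj => ?_⟩
  · exact (hlast ▸ hwlast h).trans_le (hrooted.2 i)
  · have hwj : 0 < w j := pos_of_mulVec_eq_smul hB hw.1 (specRad_nonneg C') hBw
      (k := Fin.last n)
      (by simpa [rootedConj_apply, one_sub_lastToOthers_mulVec_apply, hj] using hrs j hj)
      (hwlast hpos)
    have := congrFun hback j
    rw [one_sub_lastToOthers_mulVec_apply, if_neg hj] at this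
    linarith
end

section
/- Let C' be an n×n real matrix whose columns (except the last) and row-sum vector are all rooted, and let Q be the n×n matrix equal to the identity except its last column is all ones. Then Q^{-1} C' Q is a nonnegative matrix. -/
theorem stmt_7 {n : ℕ} (C' : Matrix (Fin (n + 1)) (Fin (n + 1)) ℝ)
    (hcol : ∀ j, j ≠ Fin.last n → Rooted (fun i => C' i j))
    (hrow : Rooted (fun i => ∑ j, C' i j))
    (Q : Matrix (Fin (n + 1)) (Fin (n + 1)) ℝ)
    (hQ : Q = Matrix.of fun j k => if j = k ∨ k = Fin.last n then (1 : ℝ) else 0) :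
    ∀ i j, 0 ≤ (Q⁻¹ * C' * Q) i j := by
  set R : Matrix (Fin (n + 1)) (Fin (n + 1)) ℝ :=
    Matrix.of fun i k => if i = k then 1 else if k = Fin.last n then -1 else 0 with hR
  have hQR : Q * R = 1 := by
    ext i k
    rw [Matrix.mul_apply]
    have hsplit : ∀ j, Q i j * R j k =
        (if j = i then R i k else 0) +
          (if j = Fin.last n then (if i = Fin.last n then 0 else R (Fin.last n) k) else 0) := by
      intro j
      by_cases hji : j = i
      · subst hji
        by_cases hj : j = Fin.last n <;> simp [hQ, hR, hj]
      · by_cases hj : j = Fin.last n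
        · subst hj
          simp [hQ, hR, hji, Ne.symm hji]
        · simp [hQ, hR, hji, hj, Ne.symm hji]
    rw [Finset.sum_congr rfl (fun j _ => hsplit j), Finset.sum_add_distrib,
      Finset.sum_ite_eq' Finset.univ i, Finset.sum_ite_eq' Finset.univ (Fin.last n)]
    simp only [Finset.mem_univ, if_true]
    by_cases hi : i = Fin.last n
    · subst hi
      by_cases hk : k = Fin.last n <;>
        simp [hR, hk, Matrix.one_apply, eq_comm]
    · by_cases hk : k = Fin.last n
      · subst hk
        simp [hR, hi, Matrix.one_apply]
      · by_cases hik : i = k <;> simp [hR, hik, hk, hi, Ne.symm hk, Matrix.one_apply]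
  have hQinv : Q⁻¹ = R := Matrix.inv_eq_right_inv hQR
  intro i j
  rw [Matrix.mul_assoc, hQinv]
  set M := C' * Q with hM
  have hMval : ∀ a, M a j = if j = Fin.last n then ∑ b, C' a b else C' a j := by
    intro a
    rw [hM, Matrix.mul_apply]
    by_cases hj : j = Fin.last n
    · subst hj
      simp [hQ]
    · have hterm : ∀ b ∈ Finset.univ, C' a b * Q b j = if b = j then C' a j else 0 := by
        intro b _
        by_cases hb : b = j
        · subst hb; simp [hQ, hj]
        · simp [hQ, hb, hj]
      rw [Finset.sum_congr rfl hterm, Finset.sum_ite_eq' Finset.univ j]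
      simp [hj]
  have hRM : (R * M) i j = M i j + (if i = Fin.last n then 0 else -(M (Fin.last n) j)) := by
    rw [Matrix.mul_apply]
    have hsplit : ∀ a, R i a * M a j =
        (if a = i then M i j else 0) +
          (if a = Fin.last n then (if i = Fin.last n then 0 else -(M (Fin.last n) j)) else 0) := by
      intro a
      by_cases ha : a = Fin.last n
      · subst ha
        by_cases hi : i = Fin.last n
        · simp [hR, hi]
        · simp [hR, hi, Ne.symm hi]
      · by_cases hai : a = i
        · subst hai; simp [hR, ha]
        · simp [hR, hai, Ne.symm hai, ha]
    rw [Finset.sum_congr rfl (fun a _ => hsplit a), Finset.sum_add_distrib,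
      Finset.sum_ite_eq' Finset.univ i, Finset.sum_ite_eq' Finset.univ (Fin.last n)]
    simp
  rw [hRM]
  by_cases hi : i = Fin.last n
  · subst hi
    simp only [if_true, add_zero, hMval]
    by_cases hj : j = Fin.last n
    · simp only [hj, if_true]; exact hrow.1
    · simp only [hj, if_false]; exact (hcol j hj).1
  · simp only [hi, if_false, hMval]
    by_cases hj : j = Fin.last n
    · simp only [hj, if_true]
      have := hrow.2 i
      linarith
    · simp only [hj, if_false]
      have := (hcol j hj).2 i
      simp only at this
      linarith
end

section
/- Fix d, f, r_1, ..., r_n ≥ 0 with r_j ≥ r_n for all 1 ≤ j ≤ n−1, and let M_n = M_n(d,f,r_1,...,r_n) be the n×n matrix whose (i,i) entry is d for i < n, whose (i,j) entry is f for i ≠ j with j < n, and whose last column is chosen so that the i-th row-sum is r_i (so the (i,n) entry is r_i − (d + (n−2)f) for i < n, and the (n,n) entry is r_n − (n−1)f). Then M_n has a rooted eigenvector v' for its largest real eigenvalue, and if f > 0 then v' can be chosen positive. -/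
/-- The matrix `M_{k+1}(d, f, r_1, …, r_{k+1})` of the paper: diagonal entries `d`
(except the last), off-diagonal entries `f` in the first `k` columns, and the last
column adjusted so that the `i`-th row-sum is `r i`. -/
noncomputable def Mmat (k : ℕ) (d f : ℝ) (r : Fin (k + 1) → ℝ) :
    Matrix (Fin (k + 1)) (Fin (k + 1)) ℝ :=
  Matrix.of fun i j =>
    if j = Fin.last k then
      (if i = Fin.last k then r i - k * f else r i - (d + ((k : ℝ) - 1) * f))
    else if i = j then d else f

lemma Mmat_mulVec_last {k : ℕ} (d f : ℝ) (r : Fin (k + 1) → ℝ) (w : Fin (k + 1) → ℝ) :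
    (Mmat k d f r).mulVec w (Fin.last k)
      = f * (∑ j : Fin k, w j.castSucc) + (r (Fin.last k) - k * f) * w (Fin.last k) := by
  have h1 : ∀ j : Fin k, j.castSucc ≠ Fin.last k := fun j => (Fin.castSucc_lt_last j).ne
  unfold Mmat Matrix.mulVec dotProduct
  rw [Fin.sum_univ_castSucc]
  simp only [Matrix.of_apply, if_true]
  rw [Finset.mul_sum]
  congr 1
  apply Finset.sum_congr rfl
  intro j _
  rw [if_neg (h1 j), if_neg fun h => (h1 j) h.symm]

lemma Mmat_mulVec_castSucc {k : ℕ} (d f : ℝ) (r : Fin (k + 1) → ℝ) (w : Fin (k + 1) → ℝ)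
    (i : Fin k) :
    (Mmat k d f r).mulVec w i.castSucc
      = (d - f) * w i.castSucc + f * (∑ j : Fin k, w j.castSucc)
        + (r i.castSucc - (d + ((k : ℝ) - 1) * f)) * w (Fin.last k) := by
  have h1 : ∀ j : Fin k, j.castSucc ≠ Fin.last k := fun j => (Fin.castSucc_lt_last j).ne
  unfold Mmat Matrix.mulVec dotProduct
  rw [Fin.sum_univ_castSucc]
  simp only [Matrix.of_apply, if_true]
  rw [if_neg (h1 i)]
  have key : ∀ j : Fin k, ∀ _ : j ∈ Finset.univ,
      (if (j.castSucc : Fin (k+1)) = Fin.last k then r i.castSucc - (d + ((k : ℝ) - 1) * f)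
      else if i.castSucc = j.castSucc then d else f) * w j.castSucc
      = f * w j.castSucc + (if j = i then (d - f) * w j.castSucc else 0) := by
    intro j _
    rw [if_neg (h1 j)]
    by_cases h : j = i
    · subst h; rw [if_pos rfl, if_pos rfl]; ring
    · rw [if_neg h, if_neg fun hc => h (Fin.castSucc_inj.mp hc).symm]; ring
  rw [Finset.sum_congr rfl key, Finset.sum_add_distrib, Finset.sum_ite_eq' Finset.univ i
    (fun j => (d - f) * w j.castSucc), if_pos (Finset.mem_univ i), ← Finset.mul_sum]
  ring

theorem stmt_8 {k : ℕ} (d f : ℝ) (r : Fin (k + 1) → ℝ)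
    (hd : 0 ≤ d) (hf : 0 ≤ f) (hrnn : ∀ i, 0 ≤ r i)
    (hrmin : ∀ j, r (Fin.last k) ≤ r j) :
    ∃ (μ : ℝ) (v' : Fin (k + 1) → ℝ),
      IsGreatest {lam : ℝ | ∃ w, w ≠ 0 ∧ (Mmat k d f r).mulVec w = lam • w} μ ∧
      v' ≠ 0 ∧ Rooted v' ∧ (Mmat k d f r).mulVec v' = μ • v' ∧
      (0 < f → ∀ i, 0 < v' i) := by
  rcases Nat.eq_zero_or_pos k with rfl | hk
  · -- k = 0 : 1×1 matrix with entry r 0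
    have hone : ∀ i : Fin (0 + 1), i = Fin.last 0 := by
      intro i; exact Fin.ext (by omega)
    have hM : ∀ (w : Fin 1 → ℝ),
        (Mmat 0 d f r).mulVec w = fun _ => r (Fin.last 0) * w (Fin.last 0) := by
      intro w
      funext i
      rw [hone i, Mmat_mulVec_last]
      simp
    refine ⟨r (Fin.last 0), fun _ => 1, ⟨⟨fun _ => 1, ?_, ?_⟩, ?_⟩, ?_, ⟨?_, ?_⟩, ?_, ?_⟩
    · intro h
      have := congrFun h (Fin.last 0)
      simp at this
    · rw [hM]; funext i; simp
    · rintro lam ⟨w, hw0, hw⟩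
      have h1 := congrFun hw (Fin.last 0)
      rw [congrFun (hM w) (Fin.last 0)] at h1
      have hwL : w (Fin.last 0) ≠ 0 := by
        intro h
        apply hw0
        funext i
        rw [hone i, h]; rfl
      simp only [Pi.smul_apply, smul_eq_mul] at h1
      exact le_of_eq (mul_right_cancel₀ hwL h1).symm
    · intro h
      have := congrFun h (Fin.last 0)
      simp at this
    · norm_num
    · intro j; norm_num
    · rw [hM]; funext i; simp
    · intro _ i; norm_num
  · -- k ≥ 1
    obtain ⟨ρ, hρ⟩ : ∃ x : ℝ, x = r (Fin.last k) := ⟨_, rfl⟩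
    obtain ⟨R, hR⟩ : ∃ x : ℝ, x = ∑ j : Fin k, r j.castSucc := ⟨_, rfl⟩
    have hrmin' : ∀ j, ρ ≤ r j := by intro j; rw [hρ]; exact hrmin j
    have hRge : (k : ℝ) * ρ ≤ R := by
      have h0 : (0:ℝ) ≤ ∑ j : Fin k, (r j.castSucc - ρ) :=
        Finset.sum_nonneg fun j _ => sub_nonneg.2 (hrmin' _)
      have h1 : ∑ j : Fin k, (r j.castSucc - ρ) = R - (k:ℝ) * ρ := by
        rw [Finset.sum_sub_distrib, Finset.sum_const, Finset.card_univ, Fintype.card_fin,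
          nsmul_eq_mul, ← hR]
      linarith [h1 ▸ h0]
    obtain ⟨D, hD⟩ : ∃ x : ℝ, x = (ρ - d + f)^2 + 4*f*(R - (k:ℝ)*ρ) := ⟨_, rfl⟩
    have hD0 : (0:ℝ) ≤ D := by rw [hD]; nlinarith [sq_nonneg (ρ - d + f)]
    have hsD : Real.sqrt D ^ 2 = D := Real.sq_sqrt hD0
    have hsD0 : (0:ℝ) ≤ Real.sqrt D := Real.sqrt_nonneg D
    have hDge : (ρ - d + f)^2 ≤ D := by rw [hD]; nlinarith
    have habs : |ρ - d + f| ≤ Real.sqrt D := by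
      rw [← Real.sqrt_sq_eq_abs]; exact Real.sqrt_le_sqrt hDge
    have habs1 : d - f - ρ ≤ Real.sqrt D := by
      cases abs_le.mp habs with
      | intro ha hb => linarith
    have habs2 : ρ - d + f ≤ Real.sqrt D := by
      linarith [le_abs_self (ρ - d + f)]
    obtain ⟨c, hc⟩ : ∃ x : ℝ, x = (-(ρ + d - f) + Real.sqrt D)/2 := ⟨_, rfl⟩
    obtain ⟨μ, hμ⟩ : ∃ x : ℝ, x = d - f + ρ + c := ⟨_, rfl⟩
    have hquad : (c + ρ) * (c + d + ((k:ℝ) - 1)*f) = f*R + (k:ℝ)*f*c := by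
      rw [hc, hD] at *
      linear_combination (1/4 : ℝ) * hsD
    -- upper bound
    have key_upper : ∀ lam ∈ {lam : ℝ | ∃ w, w ≠ 0 ∧ (Mmat k d f r).mulVec w = lam • w},
        lam ≤ μ := by
      rintro lam ⟨w, hw0, hw⟩
      obtain ⟨t, ht⟩ : ∃ x : ℝ, x = w (Fin.last k) := ⟨_, rfl⟩
      obtain ⟨S, hS⟩ : ∃ x : ℝ, x = ∑ j : Fin k, w j.castSucc := ⟨_, rfl⟩
      have hEL : f*S + (ρ - (k:ℝ)*f)*t = lam * t := by
        have h := congrFun hw (Fin.last k)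
        rw [Mmat_mulVec_last] at h
        simp only [Pi.smul_apply, smul_eq_mul] at h
        rw [← hS, ← hρ, ← ht] at h
        exact h
      have hEi : ∀ i : Fin k, (d-f)*w i.castSucc + f*S
          + (r i.castSucc - (d + ((k:ℝ)-1)*f))*t = lam * w i.castSucc := by
        intro i
        have h := congrFun hw i.castSucc
        rw [Mmat_mulVec_castSucc] at h
        simp only [Pi.smul_apply, smul_eq_mul] at h
        rw [← hS, ← ht] at h
        exact h
      by_cases hlam : lam = d - f
      · rw [hlam, hμ, hc]; linarith
      · by_cases htz : t = 0
        · exfalso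
          apply hw0
          have hfS : f * S = 0 := by rw [htz] at hEL; linarith
          funext i
          refine Fin.lastCases ?_ (fun j => ?_) i
          · rw [← ht]; exact htz
          · have h := hEi j
            rw [htz] at h
            have h2 : (lam - (d - f)) * w j.castSucc = 0 := by linarith
            rcases mul_eq_zero.mp h2 with h' | h'
            · exact absurd (by linarith : lam = d - f) hlam
            · exact h'
        · have hsum : (lam - (d - f) - (k:ℝ)*f) * S
              = (R - (k:ℝ)*d - (k:ℝ)*((k:ℝ)-1)*f)*t := by
            have e1 : ∑ i : Fin k, ((d-f)*w i.castSucc + f*S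
                + (r i.castSucc - (d + ((k:ℝ)-1)*f))*t)
                = ∑ i : Fin k, lam * w i.castSucc :=
              Finset.sum_congr rfl fun i _ => hEi i
            rw [Finset.sum_add_distrib, Finset.sum_add_distrib, ← Finset.mul_sum,
              ← Finset.mul_sum, ← Finset.mul_sum, ← Finset.sum_mul, Finset.sum_sub_distrib,
              Finset.sum_const, Finset.sum_const, Finset.card_univ, Fintype.card_fin,
              nsmul_eq_mul, nsmul_eq_mul, ← hR, ← hS] at e1
            linear_combination -e1
          have h2 : ((lam-d+f-(k:ℝ)*f)*(lam-ρ+(k:ℝ)*f))*t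
              = (f*(R - (k:ℝ)*d - (k:ℝ)*((k:ℝ)-1)*f))*t := by
            linear_combination f*hsum - (lam-d+f-(k:ℝ)*f)*hEL
          have key := mul_right_cancel₀ htz h2
          have hsq2 : (2*lam - d + f - ρ)^2 = D := by
            rw [hD]; linear_combination 4*key
          have hle : 2*lam - d + f - ρ ≤ Real.sqrt D := by
            calc 2*lam - d + f - ρ ≤ |2*lam - d + f - ρ| := le_abs_self _
            _ = Real.sqrt D := by rw [← Real.sqrt_sq_eq_abs, hsq2]
          rw [hμ, hc]; linarith
    -- eigen equation builder
    have eig : ∀ (v : Fin (k+1) → ℝ),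
        (∀ i : Fin k, (d-f)*v i.castSucc + f*(∑ j : Fin k, v j.castSucc)
          + (r i.castSucc - (d + ((k:ℝ)-1)*f))*v (Fin.last k) = μ * v i.castSucc) →
        (f*(∑ j : Fin k, v j.castSucc) + (ρ - (k:ℝ)*f)*v (Fin.last k) = μ * v (Fin.last k)) →
        (Mmat k d f r).mulVec v = μ • v := by
      intro v h1 h2
      funext i
      refine Fin.lastCases ?_ (fun j => ?_) i
      · rw [Mmat_mulVec_last, Pi.smul_apply, smul_eq_mul, ← hρ]
        exact h2
      · rw [Mmat_mulVec_castSucc, Pi.smul_apply, smul_eq_mul]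
        exact h1 j
    -- existence of rooted eigenvector
    have main : ∃ v' : Fin (k + 1) → ℝ, v' ≠ 0 ∧ Rooted v' ∧
        (Mmat k d f r).mulVec v' = μ • v' ∧ (0 < f → ∀ i, 0 < v' i) := by
      by_cases hdeg : ρ + c = 0
      · -- degenerate case: μ = d - f
        have hsd : Real.sqrt D = d - f - ρ := by rw [hc] at hdeg; linarith
        have hρd : ρ ≤ d - f := by linarith [hsd ▸ hsD0]
        have hμdf : μ = d - f := by rw [hμ]; linarith
        by_cases hfz : f = 0
        · -- f = 0 : take indicator of non-last coordinates
          refine ⟨Fin.snoc (fun _ : Fin k => (1:ℝ)) 0, ?_, ⟨?_, ?_⟩, ?_, ?_⟩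
          · intro h
            have := congrFun h ((⟨0, hk⟩ : Fin k).castSucc)
            rw [Fin.snoc_castSucc] at this
            simpa using this
          · rw [Fin.snoc_last]
          · intro j
            refine Fin.lastCases ?_ (fun i => ?_) j
            · exact le_rfl
            · rw [Fin.snoc_last, Fin.snoc_castSucc]; norm_num
          · apply eig
            · intro i
              simp only [Fin.snoc_castSucc, Fin.snoc_last]
              rw [hμdf, hfz]
              ring
            · simp only [Fin.snoc_castSucc, Fin.snoc_last]
              rw [hμdf, hfz]
              ring
          · intro hf0
            exact absurd (hfz ▸ hf0) (lt_irrefl 0)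
        · -- f > 0 : r is constant
          have hfpos : 0 < f := hf.lt_of_ne (Ne.symm hfz)
          have hc' : c = -ρ := by linarith
          have h0 : f * (R - (k:ℝ)*ρ) = 0 := by
            linear_combination -hquad + (c + d + ((k:ℝ)-1)*f - (k:ℝ)*f) * hdeg
          have hRk : R = (k:ℝ)*ρ := by
            rcases mul_eq_zero.mp h0 with h' | h'
            · exact absurd h' hfz
            · linarith
          have hrconst : ∀ j : Fin k, r j.castSucc = ρ := by
            have hsum0 : ∑ j : Fin k, (r j.castSucc - ρ) = 0 := by
              rw [Finset.sum_sub_distrib, Finset.sum_const, Finset.card_univ,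
                Fintype.card_fin, nsmul_eq_mul, ← hR, hRk]
              ring
            intro j
            have := (Finset.sum_eq_zero_iff_of_nonneg
              (fun j _ => sub_nonneg.2 (hrmin' _))).mp hsum0 j (Finset.mem_univ j)
            linarith
          have hkpos : (0:ℝ) < (k:ℝ) := by exact_mod_cast hk
          have hkf : (0:ℝ) < (k:ℝ)*f := mul_pos hkpos hfpos
          have hX : (k:ℝ)*f ≤ d + ((k:ℝ)-1)*f - ρ := by linarith
          refine ⟨Fin.snoc (fun _ : Fin k => d + ((k:ℝ)-1)*f - ρ) ((k:ℝ)*f),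
            ?_, ⟨?_, ?_⟩, ?_, ?_⟩
          · intro h
            have := congrFun h (Fin.last k)
            rw [Fin.snoc_last] at this
            simp only [Pi.zero_apply] at this
            linarith
          · rw [Fin.snoc_last]; linarith
          · intro j
            refine Fin.lastCases ?_ (fun i => ?_) j
            · exact le_rfl
            · rw [Fin.snoc_last, Fin.snoc_castSucc]; linarith
          · apply eig
            · intro i
              simp only [Fin.snoc_castSucc, Fin.snoc_last]
              rw [Finset.sum_const, Finset.card_univ, Fintype.card_fin, nsmul_eq_mul,
                hμdf, hrconst i]
              ring
            · simp only [Fin.snoc_castSucc, Fin.snoc_last]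
              rw [Finset.sum_const, Finset.card_univ, Fintype.card_fin, nsmul_eq_mul, hμdf]
              ring
          · intro _ i
            refine Fin.lastCases ?_ (fun j => ?_) i
            · rw [Fin.snoc_last]; linarith
            · rw [Fin.snoc_castSucc]; linarith
      · -- non-degenerate: take v = r + c
        have hvL : 0 ≤ ρ + c := by rw [hc]; linarith
        have hvLpos : 0 < ρ + c := lt_of_le_of_ne hvL (Ne.symm hdeg)
        have hSv : ∑ j : Fin k, (r j.castSucc + c) = R + (k:ℝ)*c := by
          rw [Finset.sum_add_distrib, Finset.sum_const, Finset.card_univ,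
            Fintype.card_fin, nsmul_eq_mul, ← hR]
        refine ⟨fun i => r i + c, ?_, ⟨?_, ?_⟩, ?_, ?_⟩
        · intro h
          have := congrFun h (Fin.last k)
          simp only [Pi.zero_apply] at this
          rw [← hρ] at this
          linarith
        · show (0:ℝ) ≤ r (Fin.last k) + c
          rw [← hρ]; linarith
        · intro j
          show r (Fin.last k) + c ≤ r j + c
          have := hrmin' j
          rw [hρ] at this
          linarith
        · apply eig
          · intro i
            show (d-f)*(r i.castSucc + c) + f*(∑ j : Fin k, (r j.castSucc + c))
              + (r i.castSucc - (d + ((k:ℝ)-1)*f))*(r (Fin.last k) + c)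
              = μ * (r i.castSucc + c)
            rw [hSv, ← hρ, hμ]
            linear_combination -hquad
          · show f*(∑ j : Fin k, (r j.castSucc + c))
              + (ρ - (k:ℝ)*f)*(r (Fin.last k) + c) = μ * (r (Fin.last k) + c)
            rw [hSv, ← hρ, hμ]
            linear_combination -hquad
        · intro _ i
          show 0 < r i + c
          linarith [hrmin' i, hvLpos]
    obtain ⟨v', hne, hrt, heig, hpos⟩ := main
    exact ⟨μ, v', ⟨⟨v', hne, heig⟩, key_upper⟩, hne, hrt, heig, hpos⟩
end

section
/- Let d, f ≥ 0 and r_1 ≥ r_2 ≥ ... ≥ r_n ≥ 0, and let M_n = M_n(d,f,r_1,...,r_n) be the n×n matrix with diagonal entries d (for rows 1 to n−1), off-diagonal entries f in the first n−1 columns, and last column adjusted so that row i has sum r_i. Then the largest real eigenvalue of M_n equals (r_n + d − f + sqrt((r_n − d + f)^2 + 4f Σ_{i=1}^{n−1}(r_i − r_n)))/2, and this value is at least max(d − f, r_n). The full spectrum of M_n is (d−f) with multiplicity n−2 together with (r_n + d − f ± sqrt((r_n − d + f)^2 + 4f Σ_{i=1}^{n−1}(r_i − r_n)))/2. -/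
noncomputable def Umat (k : ℕ) (d f : ℝ) (r : Fin (k + 2) → ℝ) :
    Matrix (Fin (k + 2)) (Fin 2) ℝ :=
  Matrix.of fun i a => if a = 0 then 1 else r i - d - k * f

noncomputable def Wmat (k : ℕ) (f : ℝ) :
    Matrix (Fin 2) (Fin (k + 2)) ℝ :=
  Matrix.of fun a j => if a = 0 then (if j = Fin.last (k + 1) then 0 else f)
    else (if j = Fin.last (k + 1) then 1 else 0)

lemma Mmat_decomp (k : ℕ) (d f : ℝ) (r : Fin (k + 2) → ℝ) :
    Mmat (k + 1) d f r = (d - f) • (1 : Matrix (Fin (k+2)) (Fin (k+2)) ℝ)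
      + Umat k d f r * Wmat k f := by
  ext i j
  simp only [Mmat, Umat, Wmat, Matrix.add_apply, Matrix.smul_apply, Matrix.one_apply,
    Matrix.mul_apply, Fin.sum_univ_two, Matrix.of_apply, smul_eq_mul]
  by_cases hj : j = Fin.last (k + 1)
  · subst hj
    by_cases hi : i = Fin.last (k + 1) <;> simp [hi] <;> push_cast <;> ring
  · by_cases hij : i = j <;> simp [hj, hij]

lemma castSucc_ne (k : ℕ) (j : Fin (k+1)) : (j.castSucc : Fin (k+2)) ≠ Fin.last (k+1) :=
  (Fin.castSucc_lt_last j).ne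

lemma det_shift (k : ℕ) (d f : ℝ) (r : Fin (k+2) → ℝ) (t : ℝ) (ht : t - (d-f) ≠ 0) :
    (t • (1 : Matrix (Fin (k+2)) (Fin (k+2)) ℝ) - Mmat (k+1) d f r).det =
    (t - (d-f))^k * ((t-(d-f))^2 - (f + r (Fin.last (k+1)) - d) * (t-(d-f))
      + f * ((k+1) * r (Fin.last (k+1)) - ((∑ i, r i) - r (Fin.last (k+1))))) := by
  set s : ℝ := t - (d - f) with hs
  set U := Umat k d f r
  set W := Wmat k f
  have h1 : t • (1 : Matrix (Fin (k+2)) (Fin (k+2)) ℝ) - Mmat (k+1) d f r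
      = s • ((1 : Matrix (Fin (k+2)) (Fin (k+2)) ℝ) - (s⁻¹ • U) * W) := by
    rw [Mmat_decomp, smul_sub, Matrix.smul_mul, smul_smul, mul_inv_cancel₀ ht, one_smul,
      sub_add_eq_sub_sub, ← sub_smul]
  rw [h1, Matrix.det_smul, Matrix.det_one_sub_mul_comm, Fintype.card_fin]
  have hA : ∑ j, W 0 j * U j 0 = (k+1) * f := by
    simp [Wmat, Umat, W, U, Fin.sum_univ_castSucc, castSucc_ne]
  have hC : ∑ j, W 1 j * U j 0 = 1 := by
    simp [Wmat, Umat, W, U, Fin.sum_univ_castSucc, castSucc_ne]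
  have hD : ∑ j, W 1 j * U j 1 = r (Fin.last (k+1)) - d - k * f := by
    simp [Wmat, Umat, W, U, Fin.sum_univ_castSucc, castSucc_ne]
  have hB : ∑ j, W 0 j * U j 1
      = f * (((∑ i, r i) - r (Fin.last (k+1))) - (k+1) * (d + k * f)) := by
    rw [Fin.sum_univ_castSucc (f := fun i : Fin (k+2) => r i)]
    simp [Wmat, Umat, W, U, Fin.sum_univ_castSucc (n := k+1), castSucc_ne,
      Finset.mul_sum, mul_sub, Finset.sum_sub_distrib, Finset.sum_const, Finset.card_univ]
    ring
  rw [Matrix.det_fin_two]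
  simp only [Matrix.sub_apply, Matrix.one_apply, Matrix.mul_apply, Matrix.smul_apply,
    smul_eq_mul]
  have pull : ∀ (a b : Fin 2), ∑ j, W a j * (s⁻¹ * U j b) = s⁻¹ * ∑ j, W a j * U j b := by
    intro a b
    rw [Finset.mul_sum]
    exact Finset.sum_congr rfl fun j _ => by ring
  rw [pull, pull, pull, pull, hA, hB, hC, hD]
  norm_num
  field_simp
  ring


lemma my_eval_charpoly {n : Type*} [DecidableEq n] [Fintype n] (M : Matrix n n ℝ) (t : ℝ) :
    M.charpoly.eval t = (t • (1 : Matrix n n ℝ) - M).det := by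
  rw [Matrix.charpoly, ← Polynomial.coe_evalRingHom, RingHom.map_det]
  congr 1
  ext i j
  by_cases h : i = j <;>
    simp [h, Matrix.charmatrix_apply, Matrix.map_apply, Matrix.one_apply, Matrix.diagonal_apply]

theorem stmt_11 {k : ℕ} (d f : ℝ) (r : Fin (k + 2) → ℝ)
    (hd : 0 ≤ d) (hf : 0 ≤ f)
    (hr : ∀ i j : Fin (k + 2), i ≤ j → r j ≤ r i) (hrn : 0 ≤ r (Fin.last (k + 1))) :
    IsGreatest {lam : ℝ | ∃ w, w ≠ 0 ∧ (Mmat (k + 1) d f r).mulVec w = lam • w}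
      ((r (Fin.last (k + 1)) + d - f +
        Real.sqrt ((r (Fin.last (k + 1)) - d + f) ^ 2 +
          4 * f * ∑ i, (r i - r (Fin.last (k + 1))))) / 2) ∧
    max (d - f) (r (Fin.last (k + 1))) ≤
      (r (Fin.last (k + 1)) + d - f +
        Real.sqrt ((r (Fin.last (k + 1)) - d + f) ^ 2 +
          4 * f * ∑ i, (r i - r (Fin.last (k + 1))))) / 2 ∧
    (Mmat (k + 1) d f r).charpoly =
      (Polynomial.X - Polynomial.C (d - f)) ^ k *
      (Polynomial.X - Polynomial.C
        ((r (Fin.last (k + 1)) + d - f +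
          Real.sqrt ((r (Fin.last (k + 1)) - d + f) ^ 2 +
            4 * f * ∑ i, (r i - r (Fin.last (k + 1))))) / 2)) *
      (Polynomial.X - Polynomial.C
        ((r (Fin.last (k + 1)) + d - f -
          Real.sqrt ((r (Fin.last (k + 1)) - d + f) ^ 2 +
            4 * f * ∑ i, (r i - r (Fin.last (k + 1))))) / 2)) := by
  set rn := r (Fin.last (k + 1)) with hrn_def
  set S := ∑ i, (r i - rn) with hS_def
  set sq := Real.sqrt ((rn - d + f) ^ 2 + 4 * f * S) with hsq_def
  set lp := (rn + d - f + sq) / 2 with hlp_def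
  set lm := (rn + d - f - sq) / 2 with hlm_def
  have hS : 0 ≤ S :=
    Finset.sum_nonneg fun i _ => sub_nonneg.2 (hr i (Fin.last (k + 1)) (Fin.le_last i))
  have hfS : 0 ≤ f * S := mul_nonneg hf hS
  have hDelta : 0 ≤ (rn - d + f) ^ 2 + 4 * f * S := by nlinarith [sq_nonneg (rn - d + f)]
  have hsq2 : sq ^ 2 = (rn - d + f) ^ 2 + 4 * f * S := Real.sq_sqrt hDelta
  have hsqnn : 0 ≤ sq := Real.sqrt_nonneg _
  have habs : |rn - d + f| ≤ sq := by
    rw [hsq_def, ← Real.sqrt_sq_eq_abs]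
    exact Real.sqrt_le_sqrt (by nlinarith)
  have hsum : lp + lm = rn + d - f := by rw [hlp_def, hlm_def]; ring
  have hprod : lp * lm = rn * (d - f) - f * S := by
    rw [hlp_def, hlm_def]
    linear_combination (-1/4 : ℝ) * hsq2
  have hSalt : f * ((k + 1) * rn - ((∑ i, r i) - rn)) = -(f * S) := by
    rw [hS_def, Finset.sum_sub_distrib, Finset.sum_const, Finset.card_univ, Fintype.card_fin]
    push_cast
    ring
  -- the char poly
  have hcp : (Mmat (k + 1) d f r).charpoly =
      (Polynomial.X - Polynomial.C (d - f)) ^ k * (Polynomial.X - Polynomial.C lp) *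
        (Polynomial.X - Polynomial.C lm) := by
    apply Polynomial.eq_of_infinite_eval_eq
    apply Set.Infinite.mono (s := ({d - f} : Set ℝ)ᶜ)
    · intro t ht
      have ht' : t - (d - f) ≠ 0 := sub_ne_zero.2 ht
      have hds := det_shift k d f r t ht'
      rw [← hrn_def] at hds
      simp only [Set.mem_setOf_eq, my_eval_charpoly, hds, Polynomial.eval_mul,
        Polynomial.eval_pow, Polynomial.eval_sub, Polynomial.eval_X, Polynomial.eval_C]
      linear_combination ((t - (d - f)) ^ k) * hSalt + ((t - (d - f)) ^ k) * t * hsum -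
        ((t - (d - f)) ^ k) * hprod
    · exact Set.Finite.infinite_compl (Set.finite_singleton _)
  -- eigenvalue membership criterion
  have hmem : ∀ lam : ℝ,
      (∃ w, w ≠ 0 ∧ (Mmat (k + 1) d f r).mulVec w = lam • w) ↔
        (lam - (d - f)) ^ k * (lam - lp) * (lam - lm) = 0 := by
    intro lam
    have h1 : (∃ w, w ≠ 0 ∧ (Mmat (k + 1) d f r).mulVec w = lam • w) ↔
        ∃ w, w ≠ 0 ∧ (lam • (1 : Matrix (Fin (k+2)) (Fin (k+2)) ℝ)
          - Mmat (k + 1) d f r).mulVec w = 0 := by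
      apply exists_congr
      intro w
      rw [Matrix.sub_mulVec, Matrix.smul_mulVec, Matrix.one_mulVec, sub_eq_zero]
      tauto
    rw [h1, Matrix.exists_mulVec_eq_zero_iff, ← my_eval_charpoly, hcp]
    simp
  -- inequalities
  have hdf_le : d - f ≤ lp := by
    have h := neg_abs_le (rn - d + f)
    rw [hlp_def]
    linarith
  have hrn_le : rn ≤ lp := by
    have h := le_abs_self (rn - d + f)
    rw [hlp_def]
    linarith
  have hlm_le : lm ≤ lp := by rw [hlp_def, hlm_def]; linarith
  refine ⟨⟨(hmem lp).mpr (by simp), ?_⟩, max_le hdf_le hrn_le, hcp⟩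
  intro lam hlam
  have h0 := (hmem lam).mp hlam
  rcases mul_eq_zero.mp h0 with h1 | h1
  · rcases mul_eq_zero.mp h1 with h2 | h2
    · have h3 : lam = d - f := sub_eq_zero.mp (pow_eq_zero_iff'.mp h2).1
      linarith
    · have : lam = lp := by linarith [sub_eq_zero.mp h2]
      linarith
  · have : lam = lm := by linarith [sub_eq_zero.mp h1]
    linarith
end

section
/- Let C be an n×n nonnegative real matrix, m the sum of all its entries, d ≥ 0 any number at least the largest diagonal entry of C, and f ≥ 0 any number at least the largest off-diagonal entry of C. Then ρ(C) ≤ (d − f + sqrt((d−f)^2 + 4mf))/2. Moreover, if mf > 0, then equality holds if and only if m = k(k−1)f + kd and there is a permutation matrix P and a nonnegative integer k such that PCP^T is the block diagonal matrix (fJ_k + (d−f)I_k) ⊕ O_{n−k}, where J_k is the k×k all-ones matrix, I_k the identity, and O_{n−k} the zero matrix. -/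
open Matrix Finset

namespace Multiset

variable {α : Type*} [LinearOrder α]

lemma foldr_max_le_iff {b c : α} (s : Multiset α) :
    s.foldr max b ≤ c ↔ b ≤ c ∧ ∀ a ∈ s, a ≤ c := by
  induction s using Multiset.induction_on with
  | empty => simp
  | cons a s ih => simp [ih, and_left_comm]

lemma foldr_max_eq_or_mem (b : α) (s : Multiset α) : s.foldr max b = b ∨ s.foldr max b ∈ s := by
  induction s using Multiset.induction_on with
  | empty => simp
  | cons a s ih =>
    rw [foldr_cons]
    rcases max_choice a (s.foldr max b) with h | h <;> rw [h]
    · simp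
    · rcases ih with h' | h'
      · exact .inl h'
      · exact .inr (mem_cons_of_mem h')

end Multiset

section Eigen

variable {ι : Type*} [Fintype ι] [DecidableEq ι]

lemma Matrix.mem_roots_charpoly_iff {K : Type*} [Field K] {M : Matrix ι ι K} {μ : K} :
    μ ∈ M.charpoly.roots ↔ ∃ v ≠ 0, M *ᵥ v = μ • v := by
  rw [Polynomial.mem_roots M.charpoly_monic.ne_zero, ← charpoly_toLin',
    ← Module.End.hasEigenvalue_iff_isRoot_charpoly]
  constructor
  · intro h
    obtain ⟨v, hv⟩ := h.exists_hasEigenvector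
    exact ⟨v, hv.2, by simpa using Module.End.mem_eigenspace_iff.1 hv.1⟩
  · rintro ⟨v, hv, h⟩
    exact Module.End.hasEigenvalue_of_hasEigenvector
      ⟨Module.End.mem_eigenspace_iff.2 (by simpa using h), hv⟩

lemma ofReal_mem_roots_charpoly_map {A : Matrix ι ι ℝ} {μ : ℝ} {v : ι → ℝ} (hv : v ≠ 0)
    (h : A *ᵥ v = μ • v) : (μ : ℂ) ∈ (A.map (fun x => (x : ℂ))).charpoly.roots := by
  have hμ : μ ∈ A.charpoly.roots := mem_roots_charpoly_iff.2 ⟨v, hv, h⟩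
  rw [show A.map (fun x => (x : ℂ)) = A.map Complex.ofRealHom from rfl, charpoly_map,
    Polynomial.mem_roots_map_of_injective Complex.ofReal_injective A.charpoly_monic.ne_zero]
  show Polynomial.eval₂ _ (Complex.ofRealHom μ) _ = 0
  rw [Polynomial.eval₂_at_apply, (Polynomial.mem_roots A.charpoly_monic.ne_zero).1 hμ, map_zero]

end Eigen

section SpecRad

variable {n : ℕ} (A : Matrix (Fin n) (Fin n) ℝ)

lemma norm_le_specRad_s14 {z : ℂ} (hz : z ∈ (A.map (fun x => (x : ℂ))).charpoly.roots) :
    ‖z‖ ≤ specRad A :=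
  ((Multiset.foldr_max_le_iff _).1 le_rfl).2 _ (Multiset.mem_map_of_mem _ hz)

lemma specRad_le_s14 {R : ℝ} (hR : 0 ≤ R)
    (h : ∀ z ∈ (A.map (fun x => (x : ℂ))).charpoly.roots, ‖z‖ ≤ R) : specRad A ≤ R :=
  (Multiset.foldr_max_le_iff _).2 ⟨hR, Multiset.forall_mem_map_iff.2 h⟩

lemma exists_norm_eq_specRad (h : specRad A ≠ 0) :
    ∃ z ∈ (A.map (fun x => (x : ℂ))).charpoly.roots, ‖z‖ = specRad A := by
  have := (Multiset.foldr_max_eq_or_mem 0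
    ((A.map (fun x => (x : ℂ))).charpoly.roots.map (fun z => ‖z‖))).resolve_left h
  exact Multiset.mem_map.1 this

end SpecRad

section Subeigenvector

variable {ι : Type*} [Fintype ι]

lemma exists_subeigenvector {C : Matrix ι ι ℝ} (hC : ∀ i j, 0 ≤ C i j) {z : ℂ} {x : ι → ℂ}
    (hx : x ≠ 0) (hz : C.map (fun x => (x : ℂ)) *ᵥ x = z • x) :
    ∃ p y, y p = 1 ∧ 0 ≤ y ∧ y ≤ 1 ∧ ‖z‖ • y ≤ C *ᵥ y := by
  obtain ⟨j₀, hj₀⟩ := Function.ne_iff.1 hx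
  obtain ⟨p, -, hp⟩ := exists_max_image univ (fun j => ‖x j‖) ⟨j₀, mem_univ j₀⟩
  have hxp : 0 < ‖x p‖ := (norm_pos_iff.2 hj₀).trans_le (hp j₀ (mem_univ _))
  have habs : ‖z‖ • (fun j => ‖x j‖) ≤ C *ᵥ (fun j => ‖x j‖) := fun j => by
    calc ‖z‖ * ‖x j‖ = ‖∑ l, (C j l : ℂ) * x l‖ := by
          rw [← norm_mul, ← smul_eq_mul, ← Pi.smul_apply, ← hz]; rfl
      _ ≤ ∑ l, C j l * ‖x l‖ := by
          refine (norm_sum_le _ _).trans_eq (sum_congr rfl fun l _ => ?_)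
          rw [norm_mul, Complex.norm_real, Real.norm_of_nonneg (hC j l)]
  refine ⟨p, ‖x p‖⁻¹ • fun j => ‖x j‖, by simp [hxp.ne'],
    fun j => mul_nonneg (inv_nonneg.2 hxp.le) (norm_nonneg _),
    fun j => by simpa using inv_mul_le_one_of_le₀ (hp j (mem_univ j)) hxp.le, ?_⟩
  rw [smul_comm, mulVec_smul]
  exact smul_le_smul_of_nonneg_left habs (inv_nonneg.2 hxp.le)

variable {C : Matrix ι ι ℝ} {y : ι → ℝ}

lemma mulVec_le_sum_row (hC : ∀ i j, 0 ≤ C i j) (hy1 : y ≤ 1) (j : ι) :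
    (C *ᵥ y) j ≤ ∑ l, C j l :=
  sum_le_sum fun l _ => mul_le_of_le_one_right (hC j l) (hy1 l)

lemma mulVec_nonneg (hC : ∀ i j, 0 ≤ C i j) (hy0 : 0 ≤ y) (j : ι) : 0 ≤ (C *ᵥ y) j :=
  sum_nonneg fun l _ => mul_nonneg (hC j l) (hy0 l)

end Subeigenvector

/-- The larger root of `X ^ 2 - a X - c`. -/
noncomputable def quadRoot (a c : ℝ) : ℝ := (a + √(a ^ 2 + 4 * c)) / 2

section QuadRoot

variable {a c : ℝ}

lemma abs_le_sqrt_sq_add (hc : 0 ≤ c) : |a| ≤ √(a ^ 2 + 4 * c) :=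
  Real.abs_le_sqrt (by linarith)

lemma quadRoot_mul_sub_self (hc : 0 ≤ c) : quadRoot a c * (quadRoot a c - a) = c := by
  have := Real.sq_sqrt (show 0 ≤ a ^ 2 + 4 * c by positivity)
  unfold quadRoot; linear_combination this / 4

lemma quadRoot_nonneg (hc : 0 ≤ c) : 0 ≤ quadRoot a c := by
  have := abs_le_sqrt_sq_add (a := a) hc
  unfold quadRoot; linarith [neg_abs_le a]

lemma quadRoot_sub_nonneg (hc : 0 ≤ c) : 0 ≤ quadRoot a c - a := by
  have := abs_le_sqrt_sq_add (a := a) hc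
  unfold quadRoot; linarith [le_abs_self a]

lemma quadRoot_pos (hc : 0 < c) : 0 < quadRoot a c := by
  have := quadRoot_mul_sub_self (a := a) hc.le
  exact (quadRoot_nonneg hc.le).lt_of_ne fun h => by rw [← h, zero_mul] at this; linarith

lemma quadRoot_sub_pos (hc : 0 < c) : 0 < quadRoot a c - a := by
  have := quadRoot_mul_sub_self (a := a) hc.le
  exact (quadRoot_sub_nonneg hc.le).lt_of_ne fun h => by rw [← h, mul_zero] at this; linarith

lemma le_quadRoot (hc : 0 ≤ c) {t : ℝ} (h : t * (t - a) ≤ c) : t ≤ quadRoot a c := by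
  by_contra! hlt
  have := quadRoot_mul_sub_self (a := a) hc
  nlinarith [quadRoot_nonneg (a := a) hc, quadRoot_sub_nonneg (a := a) hc]

lemma quadRoot_eq_of_mul_sub_self_eq {x : ℝ} (hx : a ≤ 2 * x) (h : x * (x - a) = c) :
    quadRoot a c = x := by
  rw [quadRoot, show a ^ 2 + 4 * c = (2 * x - a) ^ 2 by rw [← h]; ring,
    Real.sqrt_sq (by linarith)]
  ring

end QuadRoot

section Chain

variable {ι : Type*} [Fintype ι] [DecidableEq ι]

/-- The four terms are the slacks of the steps of the chain `t r_q ≤ (C r)_q ≤ ⋯ ≤ m f`. -/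
lemma slack_identity {R : Type*} [CommRing R] (C : Matrix ι ι R) (y : ι → R) (t d f : R)
    (q : ι) :
    (∑ i, ∑ j, C i j) * f - (C *ᵥ y) q * (t - (d - f)) =
      ∑ j, C q j * ((C *ᵥ y) j - t * y j) +
        ∑ j ∈ univ.erase q, (f * ∑ l, C j l - C q j * (C *ᵥ y) j) +
        (d - C q q) * (C *ᵥ y) q + f * ∑ j, C q j * (1 - y j) := by
  have hr := add_sum_erase univ (fun j => C q j * (C *ᵥ y) j) (mem_univ q)
  have hR := add_sum_erase univ (fun i => ∑ j, C i j) (mem_univ q)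
  simp only [mulVec, dotProduct, mul_sub, sum_sub_distrib, ← mul_sum, mul_one,
    mul_left_comm _ t] at hr hR ⊢
  linear_combination hr - f * hR

variable {C : Matrix ι ι ℝ} {y : ι → ℝ} {t d f : ℝ}

lemma slack_nonneg (hC : ∀ i j, 0 ≤ C i j) (hf0 : 0 ≤ f) (hy0 : 0 ≤ y) (hy1 : y ≤ 1)
    (hty : t • y ≤ C *ᵥ y) {q : ι} (hd : C q q ≤ d) (hf : ∀ j, q ≠ j → C q j ≤ f) :
    (∀ j, 0 ≤ C q j * ((C *ᵥ y) j - t * y j)) ∧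
      (∀ j ∈ univ.erase q, 0 ≤ f * ∑ l, C j l - C q j * (C *ᵥ y) j) ∧
      0 ≤ (d - C q q) * (C *ᵥ y) q ∧ ∀ j, 0 ≤ C q j * (1 - y j) :=
  ⟨fun j => mul_nonneg (hC q j) (sub_nonneg.2 (hty j)),
    fun j hj => sub_nonneg.2 (mul_le_mul (hf j (ne_of_mem_erase hj).symm)
      (mulVec_le_sum_row hC hy1 j) (mulVec_nonneg hC hy0 j) hf0),
    mul_nonneg (sub_nonneg.2 hd) (mulVec_nonneg hC hy0 q),
    fun j => mul_nonneg (hC q j) (sub_nonneg.2 (hy1 j))⟩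

lemma mulVec_mul_sub_le (hC : ∀ i j, 0 ≤ C i j) (hf0 : 0 ≤ f) (hy0 : 0 ≤ y) (hy1 : y ≤ 1)
    (hty : t • y ≤ C *ᵥ y) {q : ι} (hd : C q q ≤ d) (hf : ∀ j, q ≠ j → C q j ≤ f) :
    (C *ᵥ y) q * (t - (d - f)) ≤ (∑ i, ∑ j, C i j) * f := by
  obtain ⟨h₁, h₂, h₃, h₄⟩ := slack_nonneg hC hf0 hy0 hy1 hty hd hf
  linarith [slack_identity C y t d f q, sum_nonneg (s := univ) fun j _ => h₁ j, sum_nonneg h₂,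
    mul_nonneg hf0 (sum_nonneg (s := univ) fun j _ => h₄ j)]

lemma mul_sub_le_of_subeigenvector (hC : ∀ i j, 0 ≤ C i j) (hd : ∀ i, C i i ≤ d)
    (hf : ∀ i j, i ≠ j → C i j ≤ f) (hf0 : 0 ≤ f) (ht : 0 ≤ t) (hy0 : 0 ≤ y) (hy1 : y ≤ 1)
    (hty : t • y ≤ C *ᵥ y) {p : ι} (hp : y p = 1) :
    t * (t - (d - f)) ≤ (∑ i, ∑ j, C i j) * f := by
  have htr : t ≤ (C *ᵥ y) p := by simpa [hp] using hty p
  have hbound := mulVec_mul_sub_le hC hf0 hy0 hy1 hty (hd p) (hf p)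
  rcases le_total 0 (t - (d - f)) with h | h
  · exact (mul_le_mul_of_nonneg_right htr h).trans hbound
  · exact (mul_nonpos_of_nonneg_of_nonpos ht h).trans
      (mul_nonneg (sum_nonneg fun i _ => sum_nonneg fun j _ => hC i j) hf0)

end Chain

section CliqueBlock

variable {ι R : Type*} [DecidableEq ι]

/-- `(f J_K + (d - f) I_K) ⊕ O`, with the block on the index set `K`. -/
def cliqueBlock [Zero R] (K : Finset ι) (d f : R) : Matrix ι ι R :=
  of fun i j => if i ∈ K ∧ j ∈ K then (if i = j then d else f) else 0

@[simp]
lemma cliqueBlock_apply [Zero R] (K : Finset ι) (d f : R) (i j : ι) :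
    cliqueBlock K d f i j = if i ∈ K ∧ j ∈ K then (if i = j then d else f) else 0 :=
  rfl

variable [Fintype ι]

lemma sum_cliqueBlock_row [CommRing R] (K : Finset ι) (d f : R) (i : ι) :
    ∑ j, cliqueBlock K d f i j = if i ∈ K then d + ((#K : R) - 1) * f else 0 := by
  by_cases hi : i ∈ K
  · have hsplit : ∀ j ∈ K, (if i = j then d else f) = f + if i = j then d - f else 0 := by
      intro j _; split_ifs <;> abel
    simp only [cliqueBlock_apply, hi, true_and, if_true]
    rw [← sum_filter, filter_mem_eq_inter, univ_inter, sum_congr rfl hsplit, sum_add_distrib,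
      sum_const, sum_ite_eq, if_pos hi, nsmul_eq_mul]
    ring
  · simp [hi]

lemma sum_cliqueBlock [CommRing R] (K : Finset ι) (d f : R) :
    ∑ i, ∑ j, cliqueBlock K d f i j = (#K : R) * ((#K : R) - 1) * f + (#K : R) * d := by
  simp only [sum_cliqueBlock_row, ← sum_filter, filter_mem_eq_inter, univ_inter, sum_const,
    nsmul_eq_mul]
  ring

lemma cliqueBlock_mulVec_indicator [CommRing R] (K : Finset ι) (d f : R) :
    cliqueBlock K d f *ᵥ (fun j => if j ∈ K then 1 else 0) =
      (d + ((#K : R) - 1) * f) • fun j => if j ∈ K then 1 else 0 := by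
  ext i
  have : ∀ j, cliqueBlock K d f i j * (if j ∈ K then 1 else 0) = cliqueBlock K d f i j := by
    intro j; by_cases hj : j ∈ K <;> simp [hj]
  simp only [mulVec, dotProduct, this, sum_cliqueBlock_row, Pi.smul_apply, smul_eq_mul,
    mul_ite, mul_one, mul_zero]

end CliqueBlock

section EqualityCase

variable {ι : Type*} [Fintype ι] [DecidableEq ι] {C : Matrix ι ι ℝ} {y : ι → ℝ} {t d f : ℝ}

lemma slack_eq_zero (hC : ∀ i j, 0 ≤ C i j) (hf0 : 0 < f) (hy0 : 0 ≤ y) (hy1 : y ≤ 1)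
    (hty : t • y ≤ C *ᵥ y) (ht : 0 < t) (hta : 0 < t - (d - f))
    (heq : t * (t - (d - f)) = (∑ i, ∑ j, C i j) * f) {q : ι} (hq : y q = 1)
    (hd : C q q ≤ d) (hf : ∀ j, q ≠ j → C q j ≤ f) :
    (C *ᵥ y) q = t ∧ C q q = d ∧ (∀ j, C q j * ((C *ᵥ y) j - t * y j) = 0) ∧
      (∀ j ∈ univ.erase q, f * ∑ l, C j l - C q j * (C *ᵥ y) j = 0) ∧
      ∀ j, C q j * (1 - y j) = 0 := by
  obtain ⟨h₁, h₂, h₃, h₄⟩ := slack_nonneg hC hf0.le hy0 hy1 hty hd hf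
  have htr : t ≤ (C *ᵥ y) q := by simpa [hq] using hty q
  have hrt : (C *ᵥ y) q = t := le_antisymm (le_of_mul_le_mul_right
    (heq ▸ mulVec_mul_sub_le hC hf0.le hy0 hy1 hty hd hf) hta) htr
  have hS₁ := sum_nonneg (s := univ) fun j _ => h₁ j
  have hS₂ := sum_nonneg h₂
  have hS₄ := mul_nonneg hf0.le (sum_nonneg (s := univ) fun j _ => h₄ j)
  have hid := slack_identity C y t d f q
  rw [hrt, ← heq, sub_self] at hid
  rw [hrt] at h₃
  have hS₄' : f * ∑ j, C q j * (1 - y j) = 0 := by linarith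
  refine ⟨hrt, ?_, fun j => ?_, (sum_eq_zero_iff_of_nonneg h₂).1 (by linarith),
    fun j => ?_⟩
  · have h : (d - C q q) * t = 0 := by linarith
    linarith [(mul_eq_zero.1 h).resolve_right ht.ne']
  · exact (sum_eq_zero_iff_of_nonneg fun j _ => h₁ j).1 (by linarith) j (mem_univ j)
  · exact (sum_eq_zero_iff_of_nonneg fun j _ => h₄ j).1
      ((mul_eq_zero.1 hS₄').resolve_left hf0.ne') j (mem_univ j)

lemma row_eq_of_mul_sub_eq (hC : ∀ i j, 0 ≤ C i j) (hf0 : 0 < f) (hy0 : 0 ≤ y) (hy1 : y ≤ 1)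
    (hty : t • y ≤ C *ᵥ y) (ht : 0 < t) (hta : 0 < t - (d - f))
    (heq : t * (t - (d - f)) = (∑ i, ∑ j, C i j) * f) {q : ι} (hq : y q = 1)
    (hd : C q q ≤ d) (hf : ∀ j, q ≠ j → C q j ≤ f) :
    C q q = d ∧ ∑ l, C q l = t ∧ ∀ j, q ≠ j →
      (C q j = 0 ∧ ∑ l, C j l = 0) ∨ (C q j = f ∧ ∑ l, C j l = t ∧ y j = 1) := by
  obtain ⟨hrt, hdiag, h₁, h₂, h₄⟩ := slack_eq_zero hC hf0 hy0 hy1 hty ht hta heq hq hd hf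
  refine ⟨hdiag, ?_, fun j hqj => ?_⟩
  · have : ∑ l, C q l * (1 - y l) = ∑ l, C q l - (C *ᵥ y) q := by
      simp only [mul_sub, mul_one, sum_sub_distrib, mulVec, dotProduct]
    rw [sum_eq_zero fun l _ => h₄ l] at this
    linarith
  have h₂j := h₂ j (mem_erase.2 ⟨hqj.symm, mem_univ j⟩)
  rcases (hC q j).eq_or_lt with h0 | hpos
  · rw [← h0, zero_mul, sub_zero] at h₂j
    exact .inl ⟨h0.symm, (mul_eq_zero.1 h₂j).resolve_left hf0.ne'⟩
  · have hyj : y j = 1 := by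
      have := (mul_eq_zero.1 (h₄ j)).resolve_left hpos.ne'
      linarith
    have hrj : (C *ᵥ y) j = t := by
      have := (mul_eq_zero.1 (h₁ j)).resolve_left hpos.ne'
      rw [hyj] at this
      linarith
    have hRj : t ≤ ∑ l, C j l := hrj ▸ mulVec_le_sum_row hC hy1 j
    rw [hrj] at h₂j
    have hCf := hf j hqj
    have hRt : ∑ l, C j l = t := by nlinarith
    refine .inr ⟨?_, hRt, hyj⟩
    rw [hRt] at h₂j
    nlinarith

lemma eq_cliqueBlock_of_mul_sub_eq (hC : ∀ i j, 0 ≤ C i j) (hd : ∀ i, C i i ≤ d)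
    (hf : ∀ i j, i ≠ j → C i j ≤ f) (hf0 : 0 < f) (hy0 : 0 ≤ y) (hy1 : y ≤ 1)
    (hty : t • y ≤ C *ᵥ y) (ht : 0 < t) (hta : 0 < t - (d - f))
    (heq : t * (t - (d - f)) = (∑ i, ∑ j, C i j) * f) {p : ι} (hp : y p = 1) :
    C = cliqueBlock {j | ∑ l, C j l = t} d f := by
  have hrow {q : ι} (hq : y q = 1) :=
    row_eq_of_mul_sub_eq hC hf0 hy0 hy1 hty ht hta heq hq (hd q) (hf q)
  have hy : ∀ j, ∑ l, C j l = t → y j = 1 := by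
    intro j hj
    rcases eq_or_ne p j with rfl | hpj
    · exact hp
    rcases (hrow hp).2.2 j hpj with ⟨-, h0⟩ | ⟨-, -, h1⟩
    · linarith
    · exact h1
  have hout : ∀ i, ∑ l, C i l ≠ t → ∀ j, C i j = 0 := by
    intro i hi j
    have hpi : p ≠ i := by rintro rfl; exact hi (hrow hp).2.1
    rcases (hrow hp).2.2 i hpi with ⟨-, h0⟩ | ⟨-, h1, -⟩
    · exact (sum_eq_zero_iff_of_nonneg fun l _ => hC i l).1 h0 j (mem_univ j)
    · exact absurd h1 hi
  ext i j
  by_cases hi : ∑ l, C i l = t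
  · obtain ⟨hii, -, hij⟩ := hrow (hy i hi)
    rcases eq_or_ne i j with rfl | hij'
    · simp [hi, hii]
    rcases hij j hij' with ⟨h0, hj⟩ | ⟨hCf, hj, -⟩
    · simp [hi, hj, h0, ht.ne]
    · simp [hi, hj, hij', hCf]
  · simp [hi, hout i hi j]

end EqualityCase

lemma quadRoot_of_clique {k d f : ℝ} (hk : 1 ≤ k) (hd0 : 0 ≤ d) (hf0 : 0 ≤ f) :
    quadRoot (d - f) ((k * (k - 1) * f + k * d) * f) = d + (k - 1) * f :=
  quadRoot_eq_of_mul_sub_self_eq (by nlinarith) (by ring)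

section Permutation

variable {ι : Type*} [DecidableEq ι]

lemma eq_cliqueBlock_iff_apply_perm {R : Type*} [Zero R] {C : Matrix ι ι R} {K : Finset ι}
    {d f : R} {P : ι → Prop} [DecidablePred P] (σ : Equiv.Perm ι) (hσ : ∀ i, σ i ∈ K ↔ P i) :
    C = cliqueBlock K d f ↔
      ∀ i j, C (σ i) (σ j) = if P i ∧ P j then (if i = j then d else f) else 0 := by
  constructor
  · rintro rfl i j
    simp [hσ, σ.injective.eq_iff]
  · intro h
    ext i j
    simpa [← hσ] using h (σ.symm i) (σ.symm j)

variable {n : ℕ}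

lemma exists_perm_mem_iff_lt_card (K : Finset (Fin n)) :
    ∃ σ : Equiv.Perm (Fin n), ∀ i, σ i ∈ K ↔ (i : ℕ) < #K := by
  have hcard : Fintype.card {i : Fin n // (i : ℕ) < #K} = Fintype.card K := by
    rw [Fintype.card_subtype, Fin.card_filter_val_lt, Fintype.card_coe,
      min_eq_right ((card_le_univ K).trans_eq (Fintype.card_fin n))]
  let e := Fintype.equivOfCardEq hcard
  refine ⟨e.extendSubtype, fun i => ⟨fun h => ?_, e.extendSubtype_mem i⟩⟩
  by_contra hi
  exact e.extendSubtype_not_mem i hi h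

lemma card_eq_of_perm_mem_iff_lt {K : Finset (Fin n)} {k : ℕ} (hk : k ≤ n)
    (σ : Equiv.Perm (Fin n)) (hσ : ∀ i, σ i ∈ K ↔ (i : ℕ) < k) : #K = k := by
  rw [card_equiv σ.symm (t := ({i | (i : ℕ) < k} : Finset (Fin n))) fun i => by simp [← hσ],
    Fin.card_filter_val_lt, min_eq_right hk]

end Permutation

section SpectralRadius

variable {n : ℕ} {C : Matrix (Fin n) (Fin n) ℝ} {d f : ℝ}

lemma specRad_le_quadRoot (hC : ∀ i j, 0 ≤ C i j) (hd : ∀ i, C i i ≤ d)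
    (hf : ∀ i j, i ≠ j → C i j ≤ f) (hf0 : 0 ≤ f) :
    specRad C ≤ quadRoot (d - f) ((∑ i, ∑ j, C i j) * f) := by
  have hc : 0 ≤ (∑ i, ∑ j, C i j) * f :=
    mul_nonneg (sum_nonneg fun i _ => sum_nonneg fun j _ => hC i j) hf0
  refine specRad_le_s14 C (quadRoot_nonneg hc) fun z hz => ?_
  obtain ⟨x, hx, hxz⟩ := mem_roots_charpoly_iff.1 hz
  obtain ⟨p, y, hp, hy0, hy1, hty⟩ := exists_subeigenvector hC hx hxz
  exact le_quadRoot hc (mul_sub_le_of_subeigenvector hC hd hf hf0 (norm_nonneg z) hy0 hy1 hty hp)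

lemma exists_eq_cliqueBlock_of_specRad_eq (hC : ∀ i j, 0 ≤ C i j) (hd : ∀ i, C i i ≤ d)
    (hf : ∀ i j, i ≠ j → C i j ≤ f) (hmf : 0 < (∑ i, ∑ j, C i j) * f)
    (h : specRad C = quadRoot (d - f) ((∑ i, ∑ j, C i j) * f)) :
    ∃ K, C = cliqueBlock K d f := by
  have hfpos : 0 < f :=
    pos_of_mul_pos_right hmf (sum_nonneg fun i _ => sum_nonneg fun j _ => hC i j)
  have ht := quadRoot_pos (a := d - f) hmf
  obtain ⟨z, hz, hzt⟩ := exists_norm_eq_specRad C (h ▸ ht.ne')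
  obtain ⟨x, hx, hxz⟩ := mem_roots_charpoly_iff.1 hz
  obtain ⟨p, y, hp, hy0, hy1, hty⟩ := exists_subeigenvector hC hx hxz
  rw [hzt, h] at hty
  exact ⟨_, eq_cliqueBlock_of_mul_sub_eq hC hd hf hfpos hy0 hy1 hty ht (quadRoot_sub_pos hmf)
    (quadRoot_mul_sub_self hmf.le) hp⟩

lemma specRad_cliqueBlock {K : Finset (Fin n)} (hK : K.Nonempty) (hd0 : 0 ≤ d) (hf0 : 0 ≤ f) :
    specRad (cliqueBlock K d f) = d + ((#K : ℝ) - 1) * f := by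
  have hk : (1 : ℝ) ≤ #K := by exact_mod_cast hK.card_pos
  refine le_antisymm ?_ ?_
  · have hC : ∀ i j, 0 ≤ cliqueBlock K d f i j := fun i j => by
      simp only [cliqueBlock_apply]; split_ifs <;> simp_all
    have hd : ∀ i, cliqueBlock K d f i i ≤ d := fun i => by
      simp only [cliqueBlock_apply]; split_ifs <;> simp_all
    have hf : ∀ i j, i ≠ j → cliqueBlock K d f i j ≤ f := fun i j hij => by
      simp only [cliqueBlock_apply]; split_ifs <;> simp_all
    have := specRad_le_quadRoot hC hd hf hf0
    rwa [sum_cliqueBlock, quadRoot_of_clique hk hd0 hf0] at this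
  · have hv : (fun j => if j ∈ K then (1 : ℝ) else 0) ≠ 0 := by
      obtain ⟨i, hi⟩ := hK
      exact Function.ne_iff.2 ⟨i, by simp [hi]⟩
    have := norm_le_specRad_s14 _
      (ofReal_mem_roots_charpoly_map hv (cliqueBlock_mulVec_indicator K d f))
    rwa [Complex.norm_real, Real.norm_of_nonneg (by nlinarith)] at this

end SpectralRadius

theorem stmt_14 {n : ℕ} (C : Matrix (Fin n) (Fin n) ℝ)
    (hC : ∀ i j, 0 ≤ C i j)
    (m d f : ℝ) (hm : m = ∑ i, ∑ j, C i j)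
    (hd0 : 0 ≤ d) (hf0 : 0 ≤ f)
    (hd : ∀ i, C i i ≤ d) (hf : ∀ i j, i ≠ j → C i j ≤ f) :
    specRad C ≤ (d - f + Real.sqrt ((d - f) ^ 2 + 4 * m * f)) / 2 ∧
      (0 < m * f →
        (specRad C = (d - f + Real.sqrt ((d - f) ^ 2 + 4 * m * f)) / 2 ↔
          ∃ k : ℕ, k ≤ n ∧ m = (k : ℝ) * ((k : ℝ) - 1) * f + (k : ℝ) * d ∧
            ∃ σ : Equiv.Perm (Fin n), ∀ i j : Fin n,
              C (σ i) (σ j) =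
                if (i : ℕ) < k ∧ (j : ℕ) < k then (if i = j then d else f) else 0)) := by
  subst hm
  rw [show (d - f + √((d - f) ^ 2 + 4 * (∑ i, ∑ j, C i j) * f)) / 2
    = quadRoot (d - f) ((∑ i, ∑ j, C i j) * f) by rw [quadRoot, mul_assoc]]
  refine ⟨specRad_le_quadRoot hC hd hf hf0, fun hmf => ⟨fun h => ?_, ?_⟩⟩
  · obtain ⟨K, hK⟩ := exists_eq_cliqueBlock_of_specRad_eq hC hd hf hmf h
    obtain ⟨σ, hσ⟩ := exists_perm_mem_iff_lt_card K
    exact ⟨#K, (card_le_univ K).trans_eq (Fintype.card_fin n), by rw [hK, sum_cliqueBlock], σ,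
      (eq_cliqueBlock_iff_apply_perm σ hσ).1 hK⟩
  · rintro ⟨k, hkn, hmk, σ, hCσ⟩
    have hσ : ∀ i, σ i ∈ ({j | (σ.symm j : ℕ) < k} : Finset (Fin n)) ↔ (i : ℕ) < k := by simp
    have hK := card_eq_of_perm_mem_iff_lt hkn σ hσ
    have hk : 1 ≤ k := Nat.one_le_iff_ne_zero.2 fun hk0 => by simp [hmk, hk0] at hmf
    rw [hmk, (eq_cliqueBlock_iff_apply_perm σ hσ).2 hCσ,
      specRad_cliqueBlock (card_pos.1 (by omega)) hd0 hf0, hK,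
      quadRoot_of_clique (by exact_mod_cast hk) hd0 hf0]
end

section
/- Let C be a nonnegative n×n matrix with row-sum vector (r_1,...,r_n)^T, Π = {π_1,...,π_ℓ} a partition of {1,...,n} with n ∈ π_ℓ, and C' an n×n matrix admitting an equitable quotient matrix Π(C') with respect to Π such that: (i) C[−|n) ≤ C'[−|n) entrywise (all columns except the last), and Π(C') has row-sum vector with a-th entry equal to max_{i∈π_a} r_i; (ii) Π(C') has a positive rooted eigenvector for some nonnegative real eigenvalue λ'. Then ρ(C) ≤ λ'. -/
/-!
Lift the positive eigenvector `u` of the quotient `B` to `v = u ∘ π`; the equitable-quotient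
identity `S B = C' S` makes `v` an eigenvector of `C'` for `λ'`. Writing `v = v_n 𝟙 + (v - v_n 𝟙)`,
the row sums of `C` are dominated by those of `C'` (both are compared with the row sums of `B`) and
`v - v_n 𝟙` is nonnegative and vanishes at the last coordinate, where `C'` is not controlled; hence
`C v ≤ C' v = λ' v`. A positive subinvariant vector bounds the spectral radius (Collatz–Wielandt):
at a coordinate maximizing `|w_i| / v_i` for a complex eigenvector `w`, the triangle inequality
gives `|μ| ≤ λ'`.
-/

open Matrix

theorem Multiset.foldr_max_le_s16 {α : Type*} [LinearOrder α] {s : Multiset α} {b c : α}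
    (hb : b ≤ c) (hs : ∀ x ∈ s, x ≤ c) : s.foldr max b ≤ c := by
  induction s using Multiset.induction_on with
  | empty => simpa using hb
  | cons a s ih =>
    rw [Multiset.foldr_cons]
    exact max_le (hs a (Multiset.mem_cons_self a s))
      (ih fun x hx => hs x (Multiset.mem_cons_of_mem hx))

theorem Matrix.exists_mulVec_eq_smul_of_mem_roots_charpoly {ι K : Type*} [Fintype ι]
    [DecidableEq ι] [Field K] {A : Matrix ι ι K} {μ : K} (h : μ ∈ A.charpoly.roots) :
    ∃ w ≠ 0, A *ᵥ w = μ • w := by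
  have hμ : Module.End.HasEigenvalue (toLin' A) μ := by
    rw [Module.End.hasEigenvalue_iff_mem_spectrum, spectrum_toLin',
      mem_spectrum_iff_isRoot_charpoly]
    exact Polynomial.isRoot_of_mem_roots h
  obtain ⟨w, hw⟩ := hμ.exists_hasEigenvector
  exact ⟨w, hw.2, by simpa using hw.apply_eq_smul⟩

section CollatzWielandt

variable {ι : Type*} [Fintype ι] {A : Matrix ι ι ℝ}

theorem norm_mul_norm_le_sum_of_mulVec_eq_smul (hA : ∀ i j, 0 ≤ A i j)
    {μ : ℂ} {w : ι → ℂ} (hw : A.map (↑) *ᵥ w = μ • w) (i : ι) :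
    ‖μ‖ * ‖w i‖ ≤ ∑ j, A i j * ‖w j‖ := by
  calc ‖μ‖ * ‖w i‖ = ‖∑ j, (A i j : ℂ) * w j‖ := by
        rw [← norm_mul, ← smul_eq_mul, ← Pi.smul_apply, ← hw]; rfl
    _ ≤ ∑ j, ‖(A i j : ℂ) * w j‖ := norm_sum_le _ _
    _ = ∑ j, A i j * ‖w j‖ := by
        simp only [norm_mul, Complex.norm_real, Real.norm_of_nonneg (hA i _)]

theorem norm_le_of_mulVec_eq_smul_of_mulVec_le (hA : ∀ i j, 0 ≤ A i j)
    {lam : ℝ} {v : ι → ℝ} (hv : ∀ i, 0 < v i) (hAv : ∀ i, (A *ᵥ v) i ≤ lam * v i)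
    {μ : ℂ} {w : ι → ℂ} (hw0 : w ≠ 0) (hw : A.map (↑) *ᵥ w = μ • w) : ‖μ‖ ≤ lam := by
  obtain ⟨j₀, hj₀⟩ := Function.ne_iff.1 hw0
  obtain ⟨i, -, hi⟩ := Finset.exists_max_image Finset.univ (fun j => ‖w j‖ / v j)
    ⟨j₀, Finset.mem_univ j₀⟩
  set t := ‖w i‖ / v i
  have hwt : ∀ j, ‖w j‖ ≤ t * v j := fun j => (div_le_iff₀ (hv j)).1 (hi j (Finset.mem_univ j))
  have ht : 0 < t :=
    (div_pos (norm_pos_iff.2 hj₀) (hv j₀)).trans_le (hi j₀ (Finset.mem_univ j₀))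
  have hwi : ‖w i‖ = t * v i := (div_mul_cancel₀ _ (hv i).ne').symm
  have key : ‖μ‖ * (t * v i) ≤ lam * (t * v i) := by
    calc ‖μ‖ * (t * v i) = ‖μ‖ * ‖w i‖ := by rw [hwi]
      _ ≤ ∑ j, A i j * ‖w j‖ := norm_mul_norm_le_sum_of_mulVec_eq_smul hA hw i
      _ ≤ ∑ j, A i j * (t * v j) :=
          Finset.sum_le_sum fun j _ => mul_le_mul_of_nonneg_left (hwt j) (hA i j)
      _ = t * (A *ᵥ v) i := by
          simp only [mulVec, dotProduct, Finset.mul_sum]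
          exact Finset.sum_congr rfl fun j _ => by ring
      _ ≤ t * (lam * v i) := mul_le_mul_of_nonneg_left (hAv i) ht.le
      _ = lam * (t * v i) := by ring
  exact le_of_mul_le_mul_right key (mul_pos ht (hv i))

end CollatzWielandt

theorem specRad_le_of_mulVec_le {m : ℕ} {A : Matrix (Fin m) (Fin m) ℝ} (hA : ∀ i j, 0 ≤ A i j)
    {lam : ℝ} (hlam : 0 ≤ lam) {v : Fin m → ℝ} (hv : ∀ i, 0 < v i)
    (hAv : ∀ i, (A *ᵥ v) i ≤ lam * v i) : specRad A ≤ lam :=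
  Multiset.foldr_max_le_s16 hlam fun x hx => by
    obtain ⟨μ, hμ, rfl⟩ := Multiset.mem_map.1 hx
    obtain ⟨w, hw0, hw⟩ := exists_mulVec_eq_smul_of_mem_roots_charpoly hμ
    exact norm_le_of_mulVec_eq_smul_of_mulVec_le hA hv hAv hw0 hw

theorem dotProduct_le_dotProduct_of_sum_le {ι : Type*} [Fintype ι] {a b v : ι → ℝ} (k : ι)
    (hsum : ∑ j, a j ≤ ∑ j, b j) (hab : ∀ j, j ≠ k → a j ≤ b j)
    (hvk : 0 ≤ v k) (hv : ∀ j, v k ≤ v j) : a ⬝ᵥ v ≤ b ⬝ᵥ v := by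
  have split : ∀ c : ι → ℝ, c ⬝ᵥ v = (∑ j, c j) * v k + ∑ j, c j * (v j - v k) := fun c => by
    rw [dotProduct, Finset.sum_mul, ← Finset.sum_add_distrib]
    exact Finset.sum_congr rfl fun j _ => by ring
  rw [split a, split b]
  refine add_le_add (mul_le_mul_of_nonneg_right hsum hvk) (Finset.sum_le_sum fun j _ => ?_)
  by_cases hj : j = k
  · simp [hj]
  · exact mul_le_mul_of_nonneg_right (hab j hj) (sub_nonneg.2 (hv j))

def partitionCharMatrix {ι κ : Type*} (R : Type*) [Zero R] [One R] [DecidableEq κ]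
    (π : ι → κ) : Matrix ι κ R :=
  of fun j b => if π j = b then 1 else 0

section PartitionCharMatrix

variable {ι κ R : Type*} [Fintype κ] [DecidableEq κ] [Semiring R] (π : ι → κ)

theorem partitionCharMatrix_mulVec (u : κ → R) : partitionCharMatrix R π *ᵥ u = u ∘ π := by
  funext i
  simp [partitionCharMatrix, mulVec, dotProduct]

theorem sum_mul_partitionCharMatrix [Fintype ι] (M : Matrix ι ι R) (i : ι) :
    ∑ b, (M * partitionCharMatrix R π) i b = ∑ j, M i j := by
  simp only [mul_apply, partitionCharMatrix, of_apply, mul_ite, mul_one, mul_zero]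
  rw [Finset.sum_comm]
  simp

theorem sum_partitionCharMatrix_mul (B : Matrix κ κ R) (i : ι) :
    ∑ b, (partitionCharMatrix R π * B) i b = ∑ b, B (π i) b := by
  simp [mul_apply, partitionCharMatrix]

theorem sum_apply_eq_of_partitionCharMatrix_mul_eq [Fintype ι] {M : Matrix ι ι R}
    {B : Matrix κ κ R} (h : partitionCharMatrix R π * B = M * partitionCharMatrix R π) (i : ι) :
    ∑ j, M i j = ∑ b, B (π i) b := by
  rw [← sum_mul_partitionCharMatrix π, ← h, sum_partitionCharMatrix_mul]

end PartitionCharMatrix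

theorem stmt_16_general {n ℓ : ℕ}
    (C : Matrix (Fin (n + 1)) (Fin (n + 1)) ℝ) (hC : ∀ i j, 0 ≤ C i j)
    (r : Fin (n + 1) → ℝ) (hrdef : ∀ i, r i = ∑ j, C i j)
    (π : Fin (n + 1) → Fin (ℓ + 1))
    (hπlast : π (Fin.last n) = Fin.last ℓ)
    (S : Matrix (Fin (n + 1)) (Fin (ℓ + 1)) ℝ)
    (hS : S = Matrix.of fun j b => if π j = b then (1 : ℝ) else 0)
    (C' : Matrix (Fin (n + 1)) (Fin (n + 1)) ℝ)
    (B : Matrix (Fin (ℓ + 1)) (Fin (ℓ + 1)) ℝ)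
    (hquot : S * B = C' * S)
    (h1 : ∀ i j, j ≠ Fin.last n → C i j ≤ C' i j)
    (h1' : ∀ a : Fin (ℓ + 1), IsGreatest {x : ℝ | ∃ i, π i = a ∧ x = r i} (∑ b, B a b))
    (lam' : ℝ) (hlam' : 0 ≤ lam') (u : Fin (ℓ + 1) → ℝ)
    (hupos : ∀ b, 0 < u b) (hurooted : Rooted u)
    (heig : B.mulVec u = lam' • u) :
    specRad C ≤ lam' := by
  change S = partitionCharMatrix ℝ π at hS
  subst hS
  have hC'v : C' *ᵥ (u ∘ π) = lam' • (u ∘ π) := by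
    rw [← partitionCharMatrix_mulVec π, mulVec_mulVec, ← hquot, ← mulVec_mulVec, heig, mulVec_smul]
  refine specRad_le_of_mulVec_le hC hlam' (fun i => hupos (π i)) fun i => ?_
  calc (C *ᵥ (u ∘ π)) i ≤ (C' *ᵥ (u ∘ π)) i := by
        refine dotProduct_le_dotProduct_of_sum_le (Fin.last n) ?_ (h1 i) ?_ ?_
        · rw [← hrdef, sum_apply_eq_of_partitionCharMatrix_mul_eq π hquot]
          exact (h1' (π i)).2 ⟨i, rfl, rfl⟩
        · simpa [hπlast] using hurooted.1
        · simpa [hπlast] using fun j => hurooted.2 (π j)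
    _ = lam' * (u ∘ π) i := by rw [hC'v, Pi.smul_apply, smul_eq_mul]

theorem stmt_16 {n ℓ : ℕ}
    (C : Matrix (Fin (n + 1)) (Fin (n + 1)) ℝ) (hC : ∀ i j, 0 ≤ C i j)
    (r : Fin (n + 1) → ℝ) (hrdef : ∀ i, r i = ∑ j, C i j)
    (π : Fin (n + 1) → Fin (ℓ + 1)) (hπ : Function.Surjective π)
    (hπlast : π (Fin.last n) = Fin.last ℓ)
    (S : Matrix (Fin (n + 1)) (Fin (ℓ + 1)) ℝ)
    (hS : S = Matrix.of fun j b => if π j = b then (1 : ℝ) else 0)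
    (C' : Matrix (Fin (n + 1)) (Fin (n + 1)) ℝ)
    (B : Matrix (Fin (ℓ + 1)) (Fin (ℓ + 1)) ℝ)
    (hquot : S * B = C' * S)
    (h1 : ∀ i j, j ≠ Fin.last n → C i j ≤ C' i j)
    (h1' : ∀ a : Fin (ℓ + 1), IsGreatest {x : ℝ | ∃ i, π i = a ∧ x = r i} (∑ b, B a b))
    (lam' : ℝ) (hlam' : 0 ≤ lam') (u : Fin (ℓ + 1) → ℝ)
    (hupos : ∀ b, 0 < u b) (hurooted : Rooted u)
    (heig : B.mulVec u = lam' • u) :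
    specRad C ≤ lam' :=
  stmt_16_general C hC r hrdef π hπlast S hS C' B hquot h1 h1' lam' hlam' u hupos hurooted heig
end

section
/- Let C be a nonnegative n×n matrix with row-sum vector (r_1,...,r_n)^T, Π = {π_1,...,π_ℓ} a partition of {1,...,n} with n ∈ π_ℓ, and C' an n×n matrix admitting an equitable quotient matrix Π(C') with respect to Π such that: (i) C[−|n) ≥ C'[−|n) entrywise, and Π(C') has row-sum vector with a-th entry equal to min_{i∈π_a} r_i; (ii) Π(C') has a rooted (not necessarily positive) eigenvector for some nonnegative real eigenvalue λ'. Then ρ(C) ≥ λ'. -/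
open Matrix Filter
open scoped NNReal ENNReal Topology

lemma le_foldr_max_of_mem {s : Multiset ℝ} {a : ℝ} (h : a ∈ s) : a ≤ s.foldr max 0 := by
  induction s using Multiset.induction_on with
  | empty => simp at h
  | cons b t ih =>
    rw [Multiset.foldr_cons]
    rcases Multiset.mem_cons.mp h with rfl | h
    · exact le_max_left _ _
    · exact (ih h).trans (le_max_right _ _)

lemma zero_le_foldr_max (s : Multiset ℝ) : 0 ≤ s.foldr max 0 := by
  induction s using Multiset.induction_on with
  | empty => simp
  | cons b t ih => exact ih.trans (by rw [Multiset.foldr_cons]; exact le_max_right _ _)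

lemma zero_le_specRad {n : ℕ} (A : Matrix (Fin n) (Fin n) ℝ) : 0 ≤ specRad A :=
  zero_le_foldr_max _

lemma spectralRadius_map_ofReal_le_specRad {n : ℕ} (A : Matrix (Fin n) (Fin n) ℝ) :
    spectralRadius ℂ (A.map ((↑) : ℝ → ℂ)) ≤ ENNReal.ofReal (specRad A) := by
  refine iSup₂_le fun μ hμ => ?_
  rw [mem_spectrum_iff_isRoot_charpoly] at hμ
  have hroot : μ ∈ (A.map ((↑) : ℝ → ℂ)).charpoly.roots :=
    (Polynomial.mem_roots (charpoly_monic _).ne_zero).mpr hμ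
  rw [← ENNReal.ofReal_coe_nnreal, coe_nnnorm]
  exact ENNReal.ofReal_le_ofReal (le_foldr_max_of_mem (Multiset.mem_map_of_mem _ hroot))

theorem ofReal_le_spectralRadius_of_pow_le_norm {A : Type*} [NormedRing A] [NormedAlgebra ℂ A]
    [CompleteSpace A] {a : A} {lam : ℝ} (hlam : 0 ≤ lam) (h : ∀ k : ℕ, lam ^ k ≤ ‖a ^ k‖) :
    ENNReal.ofReal lam ≤ spectralRadius ℂ a := by
  refine ge_of_tendsto (spectrum.pow_nnnorm_pow_one_div_tendsto_nhds_spectralRadius a)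
    (eventually_atTop.mpr ⟨1, fun k hk => ?_⟩)
  have hk : (k : ℝ) ≠ 0 := Nat.cast_ne_zero.mpr (by omega)
  calc ENNReal.ofReal lam = (ENNReal.ofReal lam ^ k) ^ (1 / (k : ℝ)) := by
        rw [← ENNReal.rpow_natCast, ← ENNReal.rpow_mul, mul_one_div_cancel hk, ENNReal.rpow_one]
    _ ≤ (‖a ^ k‖₊ : ℝ≥0∞) ^ (1 / (k : ℝ)) := by
        gcongr
        rw [← ENNReal.ofReal_pow hlam, ← ENNReal.ofReal_coe_nnreal, coe_nnnorm]
        exact ENNReal.ofReal_le_ofReal (h k)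

section Nonneg

variable {ι : Type*} [Fintype ι] {C : Matrix ι ι ℝ}

lemma mulVec_mono_of_nonneg (hC : ∀ i j, 0 ≤ C i j) {v w : ι → ℝ} (hvw : v ≤ w) :
    C *ᵥ v ≤ C *ᵥ w := fun i =>
  dotProduct_le_dotProduct_of_nonneg_left hvw (hC i)

attribute [local instance] Matrix.linftyOpNormedRing Matrix.linftyOpNormedAlgebra
  Matrix.linftyOpNormedAddCommGroup

lemma linfty_opNorm_map_ofReal {κ : Type*} [Fintype κ] (A : Matrix ι κ ℝ) :
    ‖A.map ((↑) : ℝ → ℂ)‖ = ‖A‖ := by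
  simp only [linfty_opNorm_def, map_apply, Complex.nnnorm_real]

variable [DecidableEq ι]

lemma pow_smul_le_pow_mulVec (hC : ∀ i j, 0 ≤ C i j) {lam : ℝ} (hlam : 0 ≤ lam) {v : ι → ℝ}
    (h : lam • v ≤ C *ᵥ v) (k : ℕ) : lam ^ k • v ≤ (C ^ k) *ᵥ v := by
  induction k with
  | zero => simp
  | succ k ih =>
    calc lam ^ (k + 1) • v = lam ^ k • lam • v := by rw [pow_succ, mul_smul]
      _ ≤ lam ^ k • (C *ᵥ v) := smul_le_smul_of_nonneg_left h (pow_nonneg hlam k)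
      _ = C *ᵥ (lam ^ k • v) := (mulVec_smul C _ v).symm
      _ ≤ C *ᵥ ((C ^ k) *ᵥ v) := mulVec_mono_of_nonneg hC ih
      _ = (C ^ (k + 1)) *ᵥ v := by rw [mulVec_mulVec, pow_succ']

lemma pow_le_norm_pow_of_smul_le_mulVec (hC : ∀ i j, 0 ≤ C i j) {lam : ℝ} (hlam : 0 ≤ lam)
    {v : ι → ℝ} (hv : 0 ≤ v) (hv0 : v ≠ 0) (h : lam • v ≤ C *ᵥ v) (k : ℕ) :
    lam ^ k ≤ ‖C ^ k‖ := by
  have : Nonempty ι := by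
    by_contra hι
    exact hv0 (funext fun i => (hι ⟨i⟩).elim)
  obtain ⟨i, hi⟩ := Finite.exists_max v
  have hnorm : ‖v‖ = v i :=
    le_antisymm ((pi_norm_le_iff_of_nonneg (hv i)).mpr fun j => by
      rw [Real.norm_of_nonneg (hv j)]; exact hi j)
      ((Real.le_norm_self _).trans (norm_le_pi_norm v i))
  have hpos : 0 < ‖v‖ := norm_pos_iff.mpr hv0
  refine le_of_mul_le_mul_right ?_ hpos
  calc lam ^ k * ‖v‖ = (lam ^ k • v) i := by rw [hnorm]; rfl
    _ ≤ ((C ^ k) *ᵥ v) i := pow_smul_le_pow_mulVec hC hlam h k i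
    _ ≤ ‖(C ^ k) *ᵥ v‖ := (Real.le_norm_self _).trans (norm_le_pi_norm _ i)
    _ ≤ ‖C ^ k‖ * ‖v‖ := linfty_opNorm_mulVec _ _

theorem le_specRad_of_smul_le_mulVec {n : ℕ} {C : Matrix (Fin n) (Fin n) ℝ}
    (hC : ∀ i j, 0 ≤ C i j) {lam : ℝ} {v : Fin n → ℝ} (hv : 0 ≤ v) (hv0 : v ≠ 0)
    (h : lam • v ≤ C *ᵥ v) : lam ≤ specRad C := by
  rcases le_or_gt lam 0 with hlam | hlam
  · exact hlam.trans (zero_le_specRad C)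
  have hpow (k : ℕ) : lam ^ k ≤ ‖C.map ((↑) : ℝ → ℂ) ^ k‖ := by
    have hmap : C.map ((↑) : ℝ → ℂ) ^ k = (C ^ k).map ((↑) : ℝ → ℂ) :=
      (map_pow Complex.ofRealHom.mapMatrix C k).symm
    rw [hmap, linfty_opNorm_map_ofReal]
    exact pow_le_norm_pow_of_smul_le_mulVec hC hlam.le hv hv0 h k
  rw [← ENNReal.ofReal_le_ofReal_iff (zero_le_specRad C)]
  exact (ofReal_le_spectralRadius_of_pow_le_norm hlam.le hpow).trans
    (spectralRadius_map_ofReal_le_specRad C)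

end Nonneg

def characteristicMatrix {ι κ : Type*} [DecidableEq κ] (R : Type*) [Zero R] [One R]
    (π : ι → κ) : Matrix ι κ R :=
  of fun j b => if π j = b then 1 else 0

section EquitablePartition

variable {ι κ R : Type*} [Fintype κ] [DecidableEq κ] [Semiring R]

lemma characteristicMatrix_mulVec (π : ι → κ) (w : κ → R) :
    characteristicMatrix R π *ᵥ w = w ∘ π := by
  ext j
  simp [characteristicMatrix, mulVec, dotProduct]

variable [Fintype ι] {π : ι → κ} {C' : Matrix ι ι R} {B : Matrix κ κ R}

lemma mulVec_comp_of_mul_characteristicMatrix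
    (hquot : characteristicMatrix R π * B = C' * characteristicMatrix R π) (w : κ → R) :
    C' *ᵥ (w ∘ π) = (B *ᵥ w) ∘ π := by
  rw [← characteristicMatrix_mulVec, ← characteristicMatrix_mulVec, mulVec_mulVec, mulVec_mulVec,
    hquot]

lemma sum_row_eq_of_mul_characteristicMatrix
    (hquot : characteristicMatrix R π * B = C' * characteristicMatrix R π) (i : ι) :
    ∑ j, C' i j = ∑ b, B (π i) b := by
  simpa [mulVec, dotProduct] using congrFun (mulVec_comp_of_mul_characteristicMatrix hquot 1) i

end EquitablePartition

lemma Rooted.nonneg {n : ℕ} {v : Fin (n + 1) → ℝ} (hv : Rooted v) : 0 ≤ v := fun j =>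
  hv.1.trans (hv.2 j)

lemma Rooted.comp {n ℓ : ℕ} {u : Fin (ℓ + 1) → ℝ} (hu : Rooted u) {π : Fin (n + 1) → Fin (ℓ + 1)}
    (hπ : π (Fin.last n) = Fin.last ℓ) : Rooted (u ∘ π) := by
  refine ⟨?_, fun j => ?_⟩ <;> simp only [Function.comp_apply, hπ]
  exacts [hu.1, hu.2 (π j)]

lemma mulVec_le_mulVec_of_rooted {ι : Type*} {n : ℕ} {C C' : Matrix ι (Fin (n + 1)) ℝ}
    (hle : ∀ i j, j ≠ Fin.last n → C' i j ≤ C i j) (hsum : ∀ i, ∑ j, C' i j ≤ ∑ j, C i j)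
    {v : Fin (n + 1) → ℝ} (hv : Rooted v) : C' *ᵥ v ≤ C *ᵥ v := by
  intro i
  set t := v (Fin.last n)
  have hsplit (M : Matrix ι (Fin (n + 1)) ℝ) :
      (M *ᵥ v) i = ∑ j, M i j * (v j - t) + (∑ j, M i j) * t := by
    simp only [mulVec, dotProduct, Finset.sum_mul, ← Finset.sum_add_distrib]
    exact Finset.sum_congr rfl fun j _ => by ring
  have hterm (j : Fin (n + 1)) : C' i j * (v j - t) ≤ C i j * (v j - t) := by
    by_cases hj : j = Fin.last n
    · simp [hj, t]
    · exact mul_le_mul_of_nonneg_right (hle i j hj) (sub_nonneg.mpr (hv.2 j))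
  rw [hsplit, hsplit]
  exact add_le_add (Finset.sum_le_sum fun j _ => hterm j)
    (mul_le_mul_of_nonneg_right (hsum i) hv.1)

theorem stmt_17_general {n ℓ : ℕ}
    (C : Matrix (Fin (n + 1)) (Fin (n + 1)) ℝ) (hC : ∀ i j, 0 ≤ C i j)
    (r : Fin (n + 1) → ℝ) (hrdef : ∀ i, r i = ∑ j, C i j)
    (π : Fin (n + 1) → Fin (ℓ + 1)) (hπ : Function.Surjective π)
    (hπlast : π (Fin.last n) = Fin.last ℓ)
    (S : Matrix (Fin (n + 1)) (Fin (ℓ + 1)) ℝ)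
    (hS : S = Matrix.of fun j b => if π j = b then (1 : ℝ) else 0)
    (C' : Matrix (Fin (n + 1)) (Fin (n + 1)) ℝ)
    (B : Matrix (Fin (ℓ + 1)) (Fin (ℓ + 1)) ℝ)
    (hquot : S * B = C' * S)
    (h1 : ∀ i j, j ≠ Fin.last n → C' i j ≤ C i j)
    (h1' : ∀ a : Fin (ℓ + 1), IsLeast {x : ℝ | ∃ i, π i = a ∧ x = r i} (∑ b, B a b))
    (lam' : ℝ) (u : Fin (ℓ + 1) → ℝ)
    (hu0 : u ≠ 0) (hurooted : Rooted u)
    (heig : B.mulVec u = lam' • u) :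
    lam' ≤ specRad C := by
  subst hS
  replace hquot : characteristicMatrix ℝ π * B = C' * characteristicMatrix ℝ π := hquot
  have hv : Rooted (u ∘ π) := hurooted.comp hπlast
  have hv0 : u ∘ π ≠ 0 := fun h => hu0 (hπ.injective_comp_right h)
  have heigv : C' *ᵥ (u ∘ π) = lam' • (u ∘ π) := by
    rw [mulVec_comp_of_mul_characteristicMatrix hquot, heig]
    rfl
  have hrow (i : Fin (n + 1)) : ∑ j, C' i j ≤ ∑ j, C i j := by
    rw [sum_row_eq_of_mul_characteristicMatrix hquot, ← hrdef]
    exact (h1' (π i)).2 ⟨i, rfl, rfl⟩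
  exact le_specRad_of_smul_le_mulVec hC hv.nonneg hv0
    (heigv ▸ mulVec_le_mulVec_of_rooted h1 hrow hv)

theorem stmt_17 {n ℓ : ℕ}
    (C : Matrix (Fin (n + 1)) (Fin (n + 1)) ℝ) (hC : ∀ i j, 0 ≤ C i j)
    (r : Fin (n + 1) → ℝ) (hrdef : ∀ i, r i = ∑ j, C i j)
    (π : Fin (n + 1) → Fin (ℓ + 1)) (hπ : Function.Surjective π)
    (hπlast : π (Fin.last n) = Fin.last ℓ)
    (S : Matrix (Fin (n + 1)) (Fin (ℓ + 1)) ℝ)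
    (hS : S = Matrix.of fun j b => if π j = b then (1 : ℝ) else 0)
    (C' : Matrix (Fin (n + 1)) (Fin (n + 1)) ℝ)
    (B : Matrix (Fin (ℓ + 1)) (Fin (ℓ + 1)) ℝ)
    (hquot : S * B = C' * S)
    (h1 : ∀ i j, j ≠ Fin.last n → C' i j ≤ C i j)
    (h1' : ∀ a : Fin (ℓ + 1), IsLeast {x : ℝ | ∃ i, π i = a ∧ x = r i} (∑ b, B a b))
    (lam' : ℝ) (hlam' : 0 ≤ lam') (u : Fin (ℓ + 1) → ℝ)
    (hu0 : u ≠ 0) (hurooted : Rooted u)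
    (heig : B.mulVec u = lam' • u) :
    lam' ≤ specRad C :=
  stmt_17_general C hC r hrdef π hπ hπlast S hS C' B hquot h1 h1' lam' u hu0 hurooted heig
end
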